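/- arXiv:2402.18772 — 4 statements merged into one kernel-verified Lean document; each statement's English description precedes it below -/
import Mathlib

section
/- Let U ≤ S_s and V ≤ S_r be transitive groups and let G ≤ U ≀ V ≤ S_{rs} be a subgroup whose natural projection to V is onto. Let Δ be the block of the point 1 in the imprimitive action of G, and assume that the image of the block stabilizer G_Δ acting on Δ is all of U. Assume furthermore that U is almost simple with nonabelian simple socle L, and that K := G ∩ U^r is nontrivial. Then there exists a partition O_1, …, O_k of {1,…,r} preserved by the action of G on the blocks such that K ∩ L^{O_j} ≅ L for j = 1,…,k, and K ∩ L^r = (K ∩ L^{O_1}) × ⋯ × (K ∩ L^{O_k}), this product being the socle of K. -/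
/-- The order-preserving identification of the block `Δ_{i+1} = {i, i+r, …, i+(s-1)r}`
(0-indexed points `ZMod (r*s)`) with `ZMod s`: position `k` corresponds to `i + k*r`. -/
def blockEmb (r s : ℕ) (i : Fin r) (k : ZMod s) : ZMod (r * s) :=
  (((i : ℕ) + k.val * r : ℕ) : ZMod (r * s))

/-- The block kernel `K = G ∩ U^r`: elements of `G` preserving every block and inducing an
element of `U` on each block. -/
def blockKernel (r s : ℕ) (U : Subgroup (Equiv.Perm (ZMod s)))
    (G : Subgroup (Equiv.Perm (ZMod (r * s)))) : Subgroup (Equiv.Perm (ZMod (r * s))) where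
  carrier := {g | g ∈ G ∧ ∀ i : Fin r, ∃ u ∈ U,
    ∀ k, g (blockEmb r s i k) = blockEmb r s i (u k)}
  one_mem' := ⟨G.one_mem, fun i => ⟨1, U.one_mem, fun k => rfl⟩⟩
  mul_mem' := by
    rintro a b ⟨haG, ha⟩ ⟨hbG, hb⟩
    refine ⟨G.mul_mem haG hbG, fun i => ?_⟩
    obtain ⟨u, hu, hu'⟩ := ha i
    obtain ⟨w, hw, hw'⟩ := hb i
    refine ⟨u * w, U.mul_mem hu hw, fun k => ?_⟩
    have : (a * b) (blockEmb r s i k) = a (b (blockEmb r s i k)) := rfl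
    rw [this, hw', hu']
    rfl
  inv_mem' := by
    rintro a ⟨haG, ha⟩
    refine ⟨G.inv_mem haG, fun i => ?_⟩
    obtain ⟨u, hu, hu'⟩ := ha i
    refine ⟨u⁻¹, U.inv_mem hu, fun k => ?_⟩
    have h1 : a (blockEmb r s i (u⁻¹ k)) = blockEmb r s i k := by
      rw [hu']
      simp
    rw [← h1]
    simp

/-- The subgroup `L^O ≤ L^r` of block-diagonal permutations whose component on each block lies
in `L` and is trivial on the blocks outside `O`. -/
def diagSupport (r s : ℕ) (L : Subgroup (Equiv.Perm (ZMod s))) (O : Finset (Fin r)) :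
    Subgroup (Equiv.Perm (ZMod (r * s))) where
  carrier := {g | ∀ i : Fin r, ∃ u ∈ L, (i ∉ O → u = 1) ∧
    ∀ k, g (blockEmb r s i k) = blockEmb r s i (u k)}
  one_mem' := fun i => ⟨1, L.one_mem, fun _ => rfl, fun k => rfl⟩
  mul_mem' := by
    rintro a b ha hb
    intro i
    obtain ⟨u, hu, hu1, hu'⟩ := ha i
    obtain ⟨w, hw, hw1, hw'⟩ := hb i
    refine ⟨u * w, L.mul_mem hu hw, fun h => by rw [hu1 h, hw1 h, one_mul], fun k => ?_⟩
    have : (a * b) (blockEmb r s i k) = a (b (blockEmb r s i k)) := rfl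
    rw [this, hw', hu']
    rfl
  inv_mem' := by
    rintro a ha i
    obtain ⟨u, hu, hu1, hu'⟩ := ha i
    refine ⟨u⁻¹, L.inv_mem hu, fun h => by rw [hu1 h]; simp, fun k => ?_⟩
    have h1 : a (blockEmb r s i (u⁻¹ k)) = blockEmb r s i k := by
      rw [hu']
      simp
    rw [← h1]
    simp

/-- The socle of a group: the subgroup generated by all minimal normal subgroups. -/
def socle (G : Type*) [Group G] : Subgroup G :=
  ⨆ N ∈ {N : Subgroup G | N.Normal ∧ N ≠ ⊥ ∧
    ∀ M : Subgroup G, M.Normal → M ≤ N → M = ⊥ ∨ M = N}, N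

/-!
Write `K = G ∩ U^r`, `M = K ∩ L^r`, and `π_i : K → U` for the component on the `i`-th block.
Because `G` is transitive on the blocks and `G_Δ` induces `U` on `Δ`, every `π_i(K)` is
conjugate in `U` to `π_0(K)`, a nontrivial subgroup normalized by `U`; since `C_U(L) = 1`, it
contains `L`. Commutators with elements whose components lie in `L` then push a nontrivial element
of `K` into `M`, and the same argument gives `π_i(M) = L`: `M` is a subdirect product of copies of
the centerless simple group `L`.

Call blocks `i` and `j` equivalent when `π_i(m) = 1 ↔ π_j(m) = 1` for all `m ∈ M`. On a set of
pairwise inequivalent blocks the components of `M` can be prescribed freely: inductively, a new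
component that could not be prescribed on the elements trivial on the old blocks would be a
function of the old components, i.e. a surjection `L^S → L`, and such a surjection only sees one
coordinate, which would make the new block equivalent to an old one. Hence each class `O` gives a
factor `K ∩ L^O ≅ L`, and `M` is the direct product of these factors. They are minimal normal in
`K`, and a minimal normal subgroup `N` of `K` meeting `M` trivially would centralize `M`, so its
components would centralize `L` and vanish; thus `M` is the socle. The classes are defined through
`M` alone, which `G` normalizes, so `G` permutes them.
-/

open Equiv

open scoped commutatorElement

section AlmostSimple

variable {P : Type*} [Group P]

theorem commutatorElement_mem_of_left_mem {U L : Subgroup P}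
    (hL : ∀ u ∈ U, ∀ x ∈ L, u * x * u⁻¹ ∈ L) {a b : P} (ha : a ∈ L) (hb : b ∈ U) : ⁅a, b⁆ ∈ L := by
  rw [commutatorElement_def, mul_assoc a, mul_assoc a]
  exact L.mul_mem ha (hL b hb _ (L.inv_mem ha))

theorem commutatorElement_mem_of_right_mem {U L : Subgroup P}
    (hL : ∀ u ∈ U, ∀ x ∈ L, u * x * u⁻¹ ∈ L) {a b : P} (ha : a ∈ U) (hb : b ∈ L) : ⁅a, b⁆ ∈ L :=
  L.mul_mem (hL a ha b hb) (L.inv_mem hb)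

theorem Subgroup.eq_of_le_of_conj_mem {L N : Subgroup P} [IsSimpleGroup L] (hNL : N ≤ L)
    (hconj : ∀ h ∈ L, ∀ x ∈ N, h * x * h⁻¹ ∈ N) (hN : N ≠ ⊥) : N = L := by
  have hnormal : (N.subgroupOf L).Normal :=
    ⟨fun x hx h => Subgroup.mem_subgroupOf.2 (hconj h h.2 x (Subgroup.mem_subgroupOf.1 hx))⟩
  rcases IsSimpleGroup.eq_bot_or_eq_top_of_normal _ hnormal with h | h
  · rw [Subgroup.subgroupOf_eq_bot] at h
    exact absurd (disjoint_iff.1 (h.mono_right hNL)) (by simpa using hN)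
  · exact le_antisymm hNL (Subgroup.subgroupOf_eq_top.1 h)

theorem Subgroup.le_of_conj_mem_of_centralizer {U L N : Subgroup P} [IsSimpleGroup L]
    (hLU : L ≤ U) (hLnormal : ∀ u ∈ U, ∀ x ∈ L, u * x * u⁻¹ ∈ L)
    (hLcent : ∀ u ∈ U, (∀ x ∈ L, u * x = x * u) → u = 1) (hNU : N ≤ U)
    (hconj : ∀ h ∈ L, ∀ x ∈ N, h * x * h⁻¹ ∈ N) (hN : N ≠ ⊥) : L ≤ N := by
  suffices hNL : N ⊓ L ≠ ⊥ by
    have := Subgroup.eq_of_le_of_conj_mem inf_le_right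
      (fun h hh x hx => ⟨hconj h hh x hx.1, hLnormal h (hLU hh) x hx.2⟩) hNL
    exact this ▸ inf_le_left
  -- if `N ∩ L = 1`, the commutators of `N` with `L` are trivial, so `N` centralizes `L`
  intro hbot
  obtain ⟨x, hx, hx1⟩ := N.bot_or_exists_ne_one.resolve_left hN
  refine hx1 (hLcent x (hNU hx) fun l hl => ?_)
  have hcomm : ⁅x, l⁆ ∈ N ⊓ L :=
    ⟨commutatorElement_mem_of_left_mem hconj hx hl,
      commutatorElement_mem_of_right_mem hLnormal (hNU hx) hl⟩
  rw [hbot, Subgroup.mem_bot, commutatorElement_eq_one_iff_mul_comm] at hcomm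
  exact hcomm

end AlmostSimple

section PiSimple

variable {ι L : Type*} [Group L]

theorem Pi.mul_mulSingle_mul_inv [DecidableEq ι] (x : ι → L) (b : ι) (l : L) :
    x * Pi.mulSingle b l * x⁻¹ = Pi.mulSingle b (x b * l * (x b)⁻¹) := by
  funext j
  by_cases h : j = b
  · subst h; simp
  · simp [Pi.mulSingle_eq_of_ne h]

theorem Pi.commute_mulSingle_of_apply_eq_one [DecidableEq ι] {y : ι → L} {b : ι}
    (hy : y b = 1) (l : L) : Commute (Pi.mulSingle b l) y := by
  funext j
  by_cases h : j = b
  · subst h; simp [hy]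
  · simp [Pi.mulSingle_eq_of_ne h]

theorem exists_forall_map_eq_one_iff_of_surjective [Finite ι] [IsSimpleGroup L]
    (hL : Subgroup.center L = ⊥) (f : (ι → L) →* L) (hf : Function.Surjective f) :
    ∃ b, ∀ x, f x = 1 ↔ x b = 1 := by
  classical
  obtain ⟨b, hb⟩ : ∃ b, f.comp (MonoidHom.mulSingle _ b) ≠ 1 := by
    by_contra! h
    obtain ⟨y, hy⟩ := exists_ne (1 : L)
    obtain ⟨x, rfl⟩ := hf y
    exact hy (Subgroup.pi_mem_of_mulSingle_mem (H := f.ker) x fun i =>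
      DFunLike.congr_fun (h i) (x i))
  set fb := f.comp (MonoidHom.mulSingle _ b)
  have hnormal : fb.range.Normal := ⟨by
    rintro _ ⟨l, rfl⟩ y
    obtain ⟨x, rfl⟩ := hf y
    refine ⟨x b * l * (x b)⁻¹, ?_⟩
    change f (Pi.mulSingle b _) = f x * f (Pi.mulSingle b l) * (f x)⁻¹
    rw [← Pi.mul_mulSingle_mul_inv, map_mul, map_mul, map_inv]⟩
  have hsurj : fb.range = ⊤ := (IsSimpleGroup.eq_bot_or_eq_top_of_normal _ hnormal).resolve_left
    (by rwa [MonoidHom.range_eq_bot_iff])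
  have hinj : fb.ker = ⊥ := (IsSimpleGroup.eq_bot_or_eq_top_of_normal _ inferInstance).resolve_right
    (by rwa [MonoidHom.ker_eq_top_iff])
  have hoff : ∀ y : ι → L, y b = 1 → f y = 1 := by
    intro y hy
    have hcenter : f y ∈ Subgroup.center L := Subgroup.mem_center_iff.2 fun z => by
      obtain ⟨l, rfl⟩ : z ∈ fb.range := hsurj ▸ Subgroup.mem_top z
      simp only [fb, MonoidHom.comp_apply, MonoidHom.mulSingle_apply, ← map_mul,
        (Pi.commute_mulSingle_of_apply_eq_one hy l).eq]
    rwa [hL, Subgroup.mem_bot] at hcenter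
  refine ⟨b, fun x => ?_⟩
  have hy : f (Pi.mulSingle b (x b)⁻¹ * x) = 1 := hoff _ (by simp)
  have hx : f x = fb (x b) := calc
    f x = f (Pi.mulSingle b (x b)) * f (Pi.mulSingle b (x b)⁻¹ * x) := by
      rw [← map_mul, ← mul_assoc, ← Pi.mulSingle_mul, mul_inv_cancel, Pi.mulSingle_one, one_mul]
    _ = fb (x b) := by rw [hy, mul_one]; rfl
  rw [hx, ← MonoidHom.mem_ker, hinj, Subgroup.mem_bot]

end PiSimple

section SupportRel

variable {ι M L : Type*} [Group M] [Group L] (π : ι → M →* L)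

def SupportRel (i j : ι) : Prop := ∀ m, π i m = 1 ↔ π j m = 1

def supportSetoid : Setoid ι where
  r := SupportRel π
  iseqv := ⟨fun _ _ => Iff.rfl, fun h m => (h m).symm, fun h₁ h₂ m => (h₁ m).trans (h₂ m)⟩

variable {π} [IsSimpleGroup L]

theorem exists_forall_eq_one_and_apply_eq (hL : Subgroup.center L = ⊥)
    (hπ : ∀ i, Function.Surjective (π i)) {S : Finset ι} {a : ι}
    (hS : ∀ t : ι → L, ∃ m, ∀ i ∈ S, π i m = t i) (ha : ∀ b ∈ S, ¬ SupportRel π a b)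
    (l : L) : ∃ m, (∀ i ∈ S, π i m = 1) ∧ π a m = l := by
  classical
  set ρ : M →* (S → L) := MonoidHom.pi fun i : S => π i
  have hρ : Function.Surjective ρ := fun y => by
    obtain ⟨m, hm⟩ := hS fun i => if h : i ∈ S then y ⟨i, h⟩ else 1
    exact ⟨m, funext fun i => by simpa [ρ] using hm i i.2⟩
  rcases IsSimpleGroup.eq_bot_or_eq_top_of_normal _ (ρ.normal_ker.map (π a) (hπ a)) with hQ | hQ
  · -- `π a` would factor through the components on `S`, hence through a single one of them
    exfalso
    have hker : ρ.ker ≤ (π a).ker := fun m hm => by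
      have hmQ : π a m ∈ ρ.ker.map (π a) := ⟨m, hm, rfl⟩
      rwa [hQ, Subgroup.mem_bot] at hmQ
    set ψ := ρ.liftOfRightInverse _ (Function.rightInverse_surjInv hρ) ⟨π a, hker⟩
    have hψ : ∀ m, ψ (ρ m) = π a m := ρ.liftOfRightInverse_comp_apply _ _ _
    obtain ⟨b, hb⟩ := exists_forall_map_eq_one_iff_of_surjective hL ψ fun l => by
      obtain ⟨m, rfl⟩ := hπ a l
      exact ⟨ρ m, hψ m⟩
    exact ha b b.2 fun m => by rw [← hψ, hb]; rfl
  · obtain ⟨m, hm, hma⟩ : l ∈ ρ.ker.map (π a) := hQ ▸ Subgroup.mem_top l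
    exact ⟨m, fun i hi => congrFun hm ⟨i, hi⟩, hma⟩

theorem exists_forall_apply_eq_of_pairwise (hL : Subgroup.center L = ⊥)
    (hπ : ∀ i, Function.Surjective (π i)) (S : Finset ι) :
    (S : Set ι).Pairwise (fun i j => ¬ SupportRel π i j) →
      ∀ t : ι → L, ∃ m, ∀ i ∈ S, π i m = t i := by
  classical
  induction S using Finset.induction_on with
  | empty => exact fun _ _ => ⟨1, by simp⟩
  | insert a S ha IH =>
    intro hS t
    rw [Finset.coe_insert, Set.pairwise_insert] at hS
    obtain ⟨m, hm⟩ := IH hS.1 t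
    obtain ⟨q, hqS, hqa⟩ := exists_forall_eq_one_and_apply_eq hL hπ (IH hS.1)
      (fun b hb => (hS.2 b hb (ne_of_mem_of_not_mem hb ha).symm).1) (t a * (π a m)⁻¹)
    refine ⟨q * m, fun i hi => ?_⟩
    rcases Finset.mem_insert.1 hi with rfl | hi
    · simp [hqa]
    · simp [hqS i hi, hm i hi]

theorem exists_apply_out_eq_and_eq_one [Finite ι] (hL : Subgroup.center L = ⊥)
    (hπ : ∀ i, Function.Surjective (π i)) (c : Quotient (supportSetoid π)) (l : L) :
    ∃ m, π c.out m = l ∧ ∀ i, Quotient.mk _ i ≠ c → π i m = 1 := by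
  classical
  have := Fintype.ofFinite ι
  have hpair : ((Finset.univ.image fun c' : Quotient (supportSetoid π) => c'.out : Finset ι) :
      Set ι).Pairwise fun i j => ¬ SupportRel π i j := by
    simp only [Finset.coe_image, Finset.coe_univ, Set.image_univ]
    rintro _ ⟨c₁, rfl⟩ _ ⟨c₂, rfl⟩ hne hrel
    refine hne (congrArg Quotient.out ?_)
    rw [← Quotient.out_eq c₁, ← Quotient.out_eq c₂]
    exact Quotient.sound hrel
  obtain ⟨m, hm⟩ := exists_forall_apply_eq_of_pairwise hL hπ _ hpair
    fun i => if i = c.out then l else 1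
  refine ⟨m, by simpa using hm c.out (by simp), fun i hi => ?_⟩
  have hout : (Quotient.mk _ i : Quotient (supportSetoid π)).out ≠ c.out :=
    fun h => hi (Quotient.out_inj.1 h)
  refine (Quotient.mk_out (s := supportSetoid π) i m).1 ?_
  simpa [hout] using hm _ (Finset.mem_image_of_mem _ (Finset.mem_univ (Quotient.mk _ i)))

end SupportRel

section Socle

variable {G : Type*} [Group G]

theorem le_socle {N : Subgroup G} (hN : N.Normal) (hne : N ≠ ⊥)
    (hmin : ∀ M : Subgroup G, M.Normal → M ≤ N → M = ⊥ ∨ M = N) : N ≤ socle G :=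
  le_iSup₂ (f := fun N _ => N) N ⟨hN, hne, hmin⟩

theorem socle_le {H : Subgroup G} (h : ∀ N : Subgroup G, N.Normal → N ≠ ⊥ →
    (∀ M : Subgroup G, M.Normal → M ≤ N → M = ⊥ ∨ M = N) → N ≤ H) : socle G ≤ H :=
  iSup₂_le fun N hN => h N hN.1 hN.2.1 hN.2.2

end Socle

theorem Subgroup.existsUnique_eq_list_prod_map_subtype {P : Type*} [Group P] (K : Subgroup P)
    {k : ℕ} {A : Fin k → Subgroup P} {N : Fin k → Subgroup K}
    (hA : ∀ j, A j = (N j).map K.subtype) (m : K) :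
    (∃! x : ∀ j, A j, (m : P) = (List.ofFn fun j => (x j : P)).prod) ↔
      ∃! y : ∀ j, N j, m = (List.ofFn fun j => (y j : K)).prod := by
  obtain rfl : A = fun j => (N j).map K.subtype := funext hA
  refine (Equiv.existsUnique_congr (Equiv.piCongrRight fun j =>
    ((N j).equivMapOfInjective K.subtype K.subtype_injective).toEquiv) fun y => ?_).symm
  simp [Subtype.ext_iff, List.map_ofFn, Function.comp_def]

section Blocks

variable {r s : ℕ}

theorem val_blockEmb [NeZero s] (i : Fin r) (k : ZMod s) :
    (blockEmb r s i k).val = i + k.val * r :=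
  ZMod.val_cast_of_lt <| by nlinarith [ZMod.val_lt k, i.isLt]

variable (r s) in
def blockIdx [NeZero r] (x : ZMod (r * s)) : Fin r := ⟨x.val % r, Nat.mod_lt _ (NeZero.pos r)⟩

variable (r s) in
def blockPos (x : ZMod (r * s)) : ZMod s := ((x.val / r : ℕ) : ZMod s)

variable (r s) in
def MapsBlocks (g : Perm (ZMod (r * s))) (v : Perm (Fin r)) (u : Fin r → Perm (ZMod s)) :
    Prop :=
  ∀ i k, g (blockEmb r s i k) = blockEmb r s (v i) (u i k)

theorem MapsBlocks.inv {g : Perm (ZMod (r * s))} {v : Perm (Fin r)}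
    {u : Fin r → Perm (ZMod s)} (h : MapsBlocks r s g v u) :
    MapsBlocks r s g⁻¹ v⁻¹ fun i => (u (v⁻¹ i))⁻¹ := by
  intro i k
  rw [Perm.inv_eq_iff_eq, h]
  simp

theorem diagSupport_mono {L : Subgroup (Perm (ZMod s))} {O O' : Finset (Fin r)} (h : O ⊆ O') :
    diagSupport r s L O ≤ diagSupport r s L O' :=
  fun _ hg i => (hg i).imp fun _ ⟨hu, hu1, hgu⟩ => ⟨hu, fun hi => hu1 fun hO => hi (h hO), hgu⟩

variable [NeZero r] [NeZero s]

@[simp]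
theorem blockIdx_blockEmb (i : Fin r) (k : ZMod s) : blockIdx r s (blockEmb r s i k) = i := by
  ext
  simp only [blockIdx, val_blockEmb, Nat.add_mul_mod_self_right, Nat.mod_eq_of_lt i.isLt]

@[simp]
theorem blockPos_blockEmb (i : Fin r) (k : ZMod s) : blockPos r s (blockEmb r s i k) = k := by
  simp only [blockPos, val_blockEmb, Nat.add_mul_div_right _ _ (NeZero.pos r),
    Nat.div_eq_of_lt i.isLt, zero_add, ZMod.natCast_zmod_val]

theorem blockEmb_blockIdx_blockPos (x : ZMod (r * s)) :
    blockEmb r s (blockIdx r s x) (blockPos r s x) = x := by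
  have hval : ((x.val / r : ℕ) : ZMod s).val = x.val / r :=
    ZMod.val_cast_of_lt (Nat.div_lt_of_lt_mul (ZMod.val_lt x))
  simp only [blockEmb, blockIdx, blockPos, hval, Nat.mod_add_div', ZMod.natCast_zmod_val]

theorem blockEmb_inj {i i' : Fin r} {k k' : ZMod s} :
    blockEmb r s i k = blockEmb r s i' k' ↔ i = i' ∧ k = k' :=
  ⟨fun h => ⟨by simpa using congrArg (blockIdx r s) h, by simpa using congrArg (blockPos r s) h⟩,
    by rintro ⟨rfl, rfl⟩; rfl⟩

theorem MapsBlocks.unique {g : Perm (ZMod (r * s))} {v v' : Perm (Fin r)}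
    {u u' : Fin r → Perm (ZMod s)} (h : MapsBlocks r s g v u) (h' : MapsBlocks r s g v' u') :
    v = v' ∧ u = u' :=
  ⟨Equiv.ext fun i => (blockEmb_inj.1 ((h i 0).symm.trans (h' i 0))).1,
    funext fun i => Equiv.ext fun k => (blockEmb_inj.1 ((h i k).symm.trans (h' i k))).2⟩

variable (r s) in
def blockStab : Subgroup (Perm (ZMod (r * s))) where
  carrier := {g | ∀ x, blockIdx r s (g x) = blockIdx r s x}
  one_mem' _ := rfl
  mul_mem' hg hh x := (hg _).trans (hh x)
  inv_mem' {g} hg x := by simpa using (hg (g⁻¹ x)).symm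

theorem apply_blockEmb_of_mem {g : Perm (ZMod (r * s))} (hg : g ∈ blockStab r s) (i : Fin r)
    (k : ZMod s) :
    g (blockEmb r s i k) = blockEmb r s i (blockPos r s (g (blockEmb r s i k))) := by
  conv_lhs => rw [← blockEmb_blockIdx_blockPos (g _), hg, blockIdx_blockEmb]

def blockComp (i : Fin r) : blockStab r s →* Perm (ZMod s) where
  toFun g :=
    { toFun k := blockPos r s ((g : Perm (ZMod (r * s))) (blockEmb r s i k))
      invFun k := blockPos r s ((g : Perm (ZMod (r * s)))⁻¹ (blockEmb r s i k))
      left_inv k := by simp [← apply_blockEmb_of_mem g.2]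
      right_inv k := by
        simp only
        rw [← apply_blockEmb_of_mem (inv_mem g.2)]
        simp }
  map_one' := by ext; simp
  map_mul' g h := by
    ext k
    simp only [Subgroup.coe_mul, Perm.coe_mul, Function.comp_apply, Equiv.coe_fn_mk]
    rw [apply_blockEmb_of_mem h.2, blockPos_blockEmb]

theorem blockComp_spec (g : blockStab r s) (i : Fin r) (k : ZMod s) :
    (g : Perm (ZMod (r * s))) (blockEmb r s i k) = blockEmb r s i (blockComp i g k) :=
  apply_blockEmb_of_mem g.2 i k

theorem blockComp_eq_of_forall {g : blockStab r s} {i : Fin r} {u : Perm (ZMod s)}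
    (h : ∀ k, (g : Perm (ZMod (r * s))) (blockEmb r s i k) = blockEmb r s i (u k)) :
    blockComp i g = u :=
  Equiv.ext fun k => (blockEmb_inj.1 ((blockComp_spec g i k).symm.trans (h k))).2

theorem mem_blockStab_of_forall {g : Perm (ZMod (r * s))}
    (h : ∀ i, ∃ u : Perm (ZMod s), ∀ k, g (blockEmb r s i k) = blockEmb r s i (u k)) :
    g ∈ blockStab r s := fun x => by
  obtain ⟨u, hu⟩ := h (blockIdx r s x)
  rw [← blockEmb_blockIdx_blockPos x, hu, blockIdx_blockEmb, blockIdx_blockEmb]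

theorem eq_one_of_forall_blockComp_eq_one {g : blockStab r s} (h : ∀ i, blockComp i g = 1) :
    g = 1 := by
  ext x
  rw [← blockEmb_blockIdx_blockPos x, blockComp_spec, h]
  rfl

theorem conj_apply_blockEmb {g : Perm (ZMod (r * s))} {v : Perm (Fin r)}
    {u : Fin r → Perm (ZMod s)} (hg : MapsBlocks r s g v u) (x : blockStab r s) (i : Fin r)
    (k : ZMod s) :
    (g * x * g⁻¹) (blockEmb r s (v i) k) =
      blockEmb r s (v i) ((u i * blockComp i x * (u i)⁻¹) k) := by
  have hinv : g⁻¹ (blockEmb r s (v i) k) = blockEmb r s i ((u i)⁻¹ k) := by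
    simpa using hg.inv (v i) k
  simp only [Perm.coe_mul, Function.comp_apply, hinv, blockComp_spec]
  exact hg i _

end Blocks

/-- The setting of the theorem, with "`G` projects onto a transitive `V`" expressed as
transitivity of `G` on the blocks. -/
structure WreathSetting (r s : ℕ) [NeZero r] where
  U : Subgroup (Perm (ZMod s))
  G : Subgroup (Perm (ZMod (r * s)))
  L : Subgroup (Perm (ZMod s))
  exists_mapsBlocks : ∀ g ∈ G, ∃ v u, (∀ i, u i ∈ U) ∧ MapsBlocks r s g v u
  exists_mapsBlocks_apply_eq : ∀ i j, ∃ g ∈ G, ∃ v u, MapsBlocks r s g v u ∧ v i = j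
  exists_apply_blockEmb_zero :
    ∀ h ∈ U, ∃ g ∈ G, ∀ k, g (blockEmb r s 0 k) = blockEmb r s 0 (h k)
  L_le_U : L ≤ U
  conj_mem_L : ∀ u ∈ U, ∀ x ∈ L, u * x * u⁻¹ ∈ L
  isSimpleGroup_L : IsSimpleGroup L
  eq_one_of_commute_L : ∀ u ∈ U, (∀ x ∈ L, u * x = x * u) → u = 1
  blockKernel_ne_bot : blockKernel r s U G ≠ ⊥

namespace WreathSetting

attribute [instance] isSimpleGroup_L

variable {r s : ℕ} [NeZero r] (W : WreathSetting r s)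

theorem center_L : Subgroup.center W.L = ⊥ := by
  refine eq_bot_iff.2 fun z hz => Subgroup.mem_bot.2 (Subtype.ext ?_)
  refine W.eq_one_of_commute_L _ (W.L_le_U z.2) fun x hx => ?_
  exact congrArg Subtype.val (Subgroup.mem_center_iff.1 hz ⟨x, hx⟩).symm

variable [NeZero s]

abbrev K : Subgroup (Perm (ZMod (r * s))) := blockKernel r s W.U W.G

theorem K_le_blockStab : W.K ≤ blockStab r s := fun _ hg =>
  mem_blockStab_of_forall fun i => (hg.2 i).imp fun _ hu => hu.2

def comp (i : Fin r) : W.K →* Perm (ZMod s) :=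
  (blockComp i).comp (Subgroup.inclusion W.K_le_blockStab)

theorem comp_spec (x : W.K) (i : Fin r) (k : ZMod s) :
    (x : Perm (ZMod (r * s))) (blockEmb r s i k) = blockEmb r s i (W.comp i x k) :=
  blockComp_spec (Subgroup.inclusion W.K_le_blockStab x) i k

theorem comp_eq_of_forall {x : W.K} {i : Fin r} {u : Perm (ZMod s)}
    (h : ∀ k, (x : Perm (ZMod (r * s))) (blockEmb r s i k) = blockEmb r s i (u k)) :
    W.comp i x = u :=
  blockComp_eq_of_forall h

theorem comp_mem_U (x : W.K) (i : Fin r) : W.comp i x ∈ W.U := by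
  obtain ⟨u, hu, hxu⟩ := x.2.2 i
  rw [W.comp_eq_of_forall hxu]
  exact hu

theorem eq_one_of_forall_comp_eq_one {x : W.K} (h : ∀ i, W.comp i x = 1) : x = 1 := by
  have h1 := eq_one_of_forall_blockComp_eq_one (g := Subgroup.inclusion W.K_le_blockStab x) h
  exact Subtype.ext (by simpa using congrArg Subtype.val h1)

theorem exists_comp_ne_one {x : W.K} (hx : x ≠ 1) : ∃ i, W.comp i x ≠ 1 := by
  by_contra! h
  exact hx (W.eq_one_of_forall_comp_eq_one h)

theorem mem_U_of_mapsBlocks {g : Perm (ZMod (r * s))} (hg : g ∈ W.G) {v : Perm (Fin r)}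
    {u : Fin r → Perm (ZMod s)} (hgd : MapsBlocks r s g v u) (i : Fin r) : u i ∈ W.U := by
  obtain ⟨v', u', hu', hgd'⟩ := W.exists_mapsBlocks g hg
  rw [(hgd.unique hgd').2]
  exact hu' i

theorem conj_mem_K {g : Perm (ZMod (r * s))} (hg : g ∈ W.G) {x : Perm (ZMod (r * s))}
    (hx : x ∈ W.K) : g * x * g⁻¹ ∈ W.K := by
  obtain ⟨v, u, hu, hgd⟩ := W.exists_mapsBlocks g hg
  refine ⟨W.G.mul_mem (W.G.mul_mem hg hx.1) (W.G.inv_mem hg), fun j => ?_⟩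
  obtain ⟨i, rfl⟩ := v.surjective j
  exact ⟨_, W.U.mul_mem (W.U.mul_mem (hu i) (W.comp_mem_U ⟨x, hx⟩ i)) (W.U.inv_mem (hu i)),
    conj_apply_blockEmb hgd ⟨x, W.K_le_blockStab hx⟩ i⟩

def conjK {g : Perm (ZMod (r * s))} (hg : g ∈ W.G) : W.K →* W.K where
  toFun x := ⟨g * x * g⁻¹, W.conj_mem_K hg x.2⟩
  map_one' := by ext1; simp
  map_mul' x y := by ext1; simp [mul_assoc]

theorem comp_conjK {g : Perm (ZMod (r * s))} (hg : g ∈ W.G) {v : Perm (Fin r)}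
    {u : Fin r → Perm (ZMod s)} (hgd : MapsBlocks r s g v u) (x : W.K) (i : Fin r) :
    W.comp (v i) (W.conjK hg x) = u i * W.comp i x * (u i)⁻¹ :=
  W.comp_eq_of_forall (conj_apply_blockEmb hgd (Subgroup.inclusion W.K_le_blockStab x) i)

theorem exists_comp_conjK (i j : Fin r) :
    ∃ g, ∃ hg : g ∈ W.G, ∃ c ∈ W.U, ∀ x, W.comp j (W.conjK hg x) = c * W.comp i x * c⁻¹ := by
  obtain ⟨g, hg, v, u, hgd, rfl⟩ := W.exists_mapsBlocks_apply_eq i j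
  exact ⟨g, hg, u i, W.mem_U_of_mapsBlocks hg hgd i, fun x => W.comp_conjK hg hgd x i⟩

theorem exists_comp_conjK_ne_one {x : W.K} (hx : x ≠ 1) (i : Fin r) :
    ∃ g, ∃ hg : g ∈ W.G, W.comp i (W.conjK hg x) ≠ 1 := by
  obtain ⟨j, hj⟩ := W.exists_comp_ne_one hx
  obtain ⟨g, hg, c, -, hc⟩ := W.exists_comp_conjK j i
  exact ⟨g, hg, by rwa [hc, Ne, conj_eq_one_iff]⟩

theorem conj_mem_range_comp_zero :
    ∀ h ∈ W.U, ∀ x ∈ (W.comp 0).range, h * x * h⁻¹ ∈ (W.comp 0).range := by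
  rintro h hh _ ⟨x, rfl⟩
  obtain ⟨g, hg, hg0⟩ := W.exists_apply_blockEmb_zero h hh
  obtain ⟨v, u, -, hgd⟩ := W.exists_mapsBlocks g hg
  have hblock := fun k => blockEmb_inj.1 ((hgd 0 k).symm.trans (hg0 k))
  have hv : v 0 = 0 := (hblock 0).1
  have hu : u 0 = h := Equiv.ext fun k => (hblock k).2
  refine ⟨W.conjK hg x, ?_⟩
  simpa [hv, hu] using W.comp_conjK hg hgd x 0

theorem range_comp_ne_bot (i : Fin r) : (W.comp i).range ≠ ⊥ := by
  obtain ⟨x, hx⟩ := Subgroup.ne_bot_iff_exists_ne_one.1 W.blockKernel_ne_bot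
  obtain ⟨g, hg, hgx⟩ := W.exists_comp_conjK_ne_one hx i
  intro h
  have hmem : W.comp i (W.conjK hg x) ∈ (W.comp i).range := ⟨_, rfl⟩
  rw [h, Subgroup.mem_bot] at hmem
  exact hgx hmem

theorem L_le_range_comp_zero : W.L ≤ (W.comp 0).range :=
  Subgroup.le_of_conj_mem_of_centralizer W.L_le_U W.conj_mem_L W.eq_one_of_commute_L
    (by rintro _ ⟨x, rfl⟩; exact W.comp_mem_U x 0)
    (fun h hh => W.conj_mem_range_comp_zero h (W.L_le_U hh)) (W.range_comp_ne_bot 0)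

theorem exists_comp_eq {l : Perm (ZMod s)} (hl : l ∈ W.L) (i : Fin r) :
    ∃ x : W.K, W.comp i x = l := by
  obtain ⟨g, hg, c, hc, hcomp⟩ := W.exists_comp_conjK 0 i
  have hl' : c⁻¹ * l * c⁻¹⁻¹ ∈ W.L := W.conj_mem_L _ (W.U.inv_mem hc) _ hl
  obtain ⟨x, hx⟩ := W.L_le_range_comp_zero hl'
  exact ⟨W.conjK hg x, by rw [hcomp, hx]; group⟩

theorem exists_ne_one_forall_lt_comp_mem (n : ℕ) :
    ∃ y : W.K, y ≠ 1 ∧ ∀ i : Fin r, (i : ℕ) < n → W.comp i y ∈ W.L := by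
  induction n with
  | zero =>
    obtain ⟨y, hy⟩ := Subgroup.ne_bot_iff_exists_ne_one.1 W.blockKernel_ne_bot
    exact ⟨y, hy, fun i hi => absurd hi (Nat.not_lt_zero _)⟩
  | succ n ih =>
    obtain ⟨y, hy, hyL⟩ := ih
    by_cases h : ∃ j : Fin r, (j : ℕ) = n ∧ W.comp j y ∉ W.L
    · obtain ⟨j, rfl, hj⟩ := h
      -- the commutator with an element whose `j`-component is in `L` but does not commute with
      -- that of `y` has a nontrivial `j`-component in `L`, and keeps the earlier ones in `L`
      obtain ⟨l, hl, hlc⟩ : ∃ l ∈ W.L, W.comp j y * l ≠ l * W.comp j y := by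
        by_contra! hc
        exact hj (W.eq_one_of_commute_L _ (W.comp_mem_U y j) hc ▸ W.L.one_mem)
      obtain ⟨κ, hκ⟩ := W.exists_comp_eq hl j
      refine ⟨⁅y, κ⁆, fun h1 => hlc ?_, fun i hi => ?_⟩
      · have := congrArg (W.comp j) h1
        rwa [map_commutatorElement, hκ, map_one, commutatorElement_eq_one_iff_mul_comm] at this
      · rw [map_commutatorElement]
        rcases Nat.lt_succ_iff_lt_or_eq.1 hi with hi | hi
        · exact commutatorElement_mem_of_left_mem W.conj_mem_L (hyL i hi) (W.comp_mem_U κ i)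
        · rw [Fin.ext hi, hκ]
          exact commutatorElement_mem_of_right_mem W.conj_mem_L (W.comp_mem_U y j) hl
    · push Not at h
      exact ⟨y, hy, fun i hi => (Nat.lt_succ_iff_lt_or_eq.1 hi).elim (hyL i) (h i)⟩

/-- `K ∩ L^O`, as a subgroup of `K`. -/
def supportedIn (O : Finset (Fin r)) : Subgroup W.K where
  carrier := {x | ∀ i, W.comp i x ∈ W.L ∧ (i ∉ O → W.comp i x = 1)}
  one_mem' i := by simp [W.L.one_mem]
  mul_mem' hx hy i := ⟨by rw [map_mul]; exact W.L.mul_mem (hx i).1 (hy i).1,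
    fun hi => by rw [map_mul, (hx i).2 hi, (hy i).2 hi, one_mul]⟩
  inv_mem' hx i := ⟨by rw [map_inv]; exact W.L.inv_mem (hx i).1,
    fun hi => by rw [map_inv, (hx i).2 hi, inv_one]⟩

instance supportedIn_normal (O : Finset (Fin r)) : (W.supportedIn O).Normal :=
  ⟨fun x hx y i => ⟨by simpa using W.conj_mem_L _ (W.comp_mem_U y i) _ (hx i).1,
    fun hi => by simp [(hx i).2 hi]⟩⟩

abbrev M : Subgroup W.K := W.supportedIn Finset.univ

theorem mem_M_iff {x : W.K} : x ∈ W.M ↔ ∀ i, W.comp i x ∈ W.L :=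
  ⟨fun h i => (h i).1, fun h i => ⟨h i, fun hi => absurd (Finset.mem_univ i) hi⟩⟩

theorem supportedIn_le_M (O : Finset (Fin r)) : W.supportedIn O ≤ W.M :=
  fun _ hx => W.mem_M_iff.2 fun i => (hx i).1

theorem conjK_mem_M {g : Perm (ZMod (r * s))} (hg : g ∈ W.G) {x : W.K} (hx : x ∈ W.M) :
    W.conjK hg x ∈ W.M := by
  obtain ⟨v, u, hu, hgd⟩ := W.exists_mapsBlocks g hg
  refine W.mem_M_iff.2 fun j => ?_
  obtain ⟨i, rfl⟩ := v.surjective j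
  rw [W.comp_conjK hg hgd]
  exact W.conj_mem_L _ (hu i) _ (W.mem_M_iff.1 hx i)

theorem M_ne_bot : W.M ≠ ⊥ := by
  obtain ⟨y, hy, hyL⟩ := W.exists_ne_one_forall_lt_comp_mem r
  exact Subgroup.ne_bot_iff_exists_ne_one.2
    ⟨⟨y, W.mem_M_iff.2 fun i => hyL i i.isLt⟩, fun h => hy (congrArg Subtype.val h)⟩

theorem map_comp_eq_L {N : Subgroup W.K} (hN : N.Normal) {i : Fin r}
    (hNL : ∀ n ∈ N, W.comp i n ∈ W.L) (hne : ∃ n ∈ N, W.comp i n ≠ 1) :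
    N.map (W.comp i) = W.L := by
  refine Subgroup.eq_of_le_of_conj_mem ?_ ?_ ?_
  · rintro _ ⟨n, hn, rfl⟩
    exact hNL n hn
  · rintro h hh _ ⟨n, hn, rfl⟩
    obtain ⟨κ, rfl⟩ := W.exists_comp_eq hh i
    exact ⟨κ * n * κ⁻¹, hN.conj_mem n hn κ, by simp⟩
  · obtain ⟨n, hn, hn1⟩ := hne
    intro h
    have hmem : W.comp i n ∈ N.map (W.comp i) := ⟨n, hn, rfl⟩
    rw [h, Subgroup.mem_bot] at hmem
    exact hn1 hmem

theorem map_comp_M (i : Fin r) : W.M.map (W.comp i) = W.L := by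
  refine W.map_comp_eq_L inferInstance (fun n hn => W.mem_M_iff.1 hn i) ?_
  obtain ⟨m, hm⟩ := Subgroup.ne_bot_iff_exists_ne_one.1 W.M_ne_bot
  obtain ⟨g, hg, hgm⟩ := W.exists_comp_conjK_ne_one (x := m) (fun h => hm (Subtype.ext h)) i
  exact ⟨_, W.conjK_mem_M hg m.2, hgm⟩

def compM (i : Fin r) : W.M →* W.L :=
  ((W.comp i).comp W.M.subtype).codRestrict W.L fun m => W.mem_M_iff.1 m.2 i

theorem compM_eq_one_iff (m : W.M) (i : Fin r) : W.compM i m = 1 ↔ W.comp i m = 1 :=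
  Subtype.ext_iff

theorem compM_surjective (i : Fin r) : Function.Surjective (W.compM i) := by
  rintro ⟨l, hl⟩
  rw [← W.map_comp_M i] at hl
  obtain ⟨m, hm, rfl⟩ := hl
  exact ⟨⟨m, hm⟩, rfl⟩

/-- The parts `O_j` of the partition: two blocks are equivalent when every element of `K ∩ L^r`
is trivial on both of them or on neither. -/
abbrev Part : Type := Quotient (supportSetoid W.compM)

theorem mk_eq_mk_iff {i j : Fin r} :
    (Quotient.mk _ i : W.Part) = Quotient.mk _ j ↔ ∀ m ∈ W.M, W.comp i m = 1 ↔ W.comp j m = 1 :=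
  Quotient.eq.trans ⟨fun h m hm => by simpa [compM_eq_one_iff] using h ⟨m, hm⟩,
    fun h m => by simpa [compM_eq_one_iff] using h m m.2⟩

open Classical in
noncomputable def blocks (c : W.Part) : Finset (Fin r) := {i | Quotient.mk _ i = c}

theorem mem_blocks {c : W.Part} {i : Fin r} : i ∈ W.blocks c ↔ Quotient.mk _ i = c := by
  simp [blocks]

noncomputable abbrev factor (c : W.Part) : Subgroup W.K := W.supportedIn (W.blocks c)

theorem comp_eq_one_of_mem_factor {c : W.Part} {x : W.K} (hx : x ∈ W.factor c) {i : Fin r}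
    (hi : Quotient.mk _ i ≠ c) : W.comp i x = 1 :=
  (hx i).2 (W.mem_blocks.not.2 hi)

theorem eq_one_of_mem_factor {c : W.Part} {x : W.K} (hx : x ∈ W.factor c)
    (h1 : W.comp c.out x = 1) : x = 1 := by
  refine W.eq_one_of_forall_comp_eq_one fun i => ?_
  by_cases hi : Quotient.mk _ i = c
  · rw [← Quotient.out_eq c, W.mk_eq_mk_iff] at hi
    exact (hi x (W.supportedIn_le_M _ hx)).2 h1
  · exact W.comp_eq_one_of_mem_factor hx hi

theorem eq_of_mem_factor {c : W.Part} {x y : W.K} (hx : x ∈ W.factor c) (hy : y ∈ W.factor c)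
    (h : W.comp c.out x = W.comp c.out y) : x = y :=
  mul_inv_eq_one.1 (W.eq_one_of_mem_factor (mul_mem hx (inv_mem hy)) (by simp [h]))

theorem exists_mem_factor_comp_out_eq (c : W.Part) {l : Perm (ZMod s)} (hl : l ∈ W.L) :
    ∃ x ∈ W.factor c, W.comp c.out x = l := by
  obtain ⟨m, hm, hoff⟩ :=
    exists_apply_out_eq_and_eq_one W.center_L W.compM_surjective c ⟨l, hl⟩
  refine ⟨m, fun i => ⟨W.mem_M_iff.1 m.2 i, fun hi => ?_⟩, congrArg Subtype.val hm⟩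
  exact (W.compM_eq_one_iff m i).1 (hoff i (W.mem_blocks.not.1 hi))

noncomputable def factorEquiv (c : W.Part) : W.factor c ≃* W.L :=
  MulEquiv.ofBijective
    (((W.comp c.out).comp (W.factor c).subtype).codRestrict W.L fun x => (x.2 c.out).1)
    ⟨(injective_iff_map_eq_one _).2 fun x hx =>
        Subtype.ext (W.eq_one_of_mem_factor x.2 (congrArg Subtype.val hx)),
      fun ⟨l, hl⟩ => by
        obtain ⟨x, hx, hxl⟩ := W.exists_mem_factor_comp_out_eq c hl
        exact ⟨⟨x, hx⟩, Subtype.ext hxl⟩⟩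

theorem factor_ne_bot (c : W.Part) : W.factor c ≠ ⊥ := by
  have := (W.factorEquiv c).toEquiv.nontrivial
  exact (Subgroup.nontrivial_iff_ne_bot _).1 this

theorem eq_bot_or_eq_factor {c : W.Part} {N : Subgroup W.K} (hN : N.Normal)
    (hle : N ≤ W.factor c) : N = ⊥ ∨ N = W.factor c := by
  refine or_iff_not_imp_left.2 fun hbot => le_antisymm hle fun x hx => ?_
  obtain ⟨n, hn, hn1⟩ := N.bot_or_exists_ne_one.resolve_left hbot
  have hL := W.map_comp_eq_L hN (i := c.out) (fun n hn => (hle hn c.out).1)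
    ⟨n, hn, fun h => hn1 (W.eq_one_of_mem_factor (hle hn) h)⟩
  obtain ⟨n, hn, hnx⟩ : W.comp c.out x ∈ N.map (W.comp c.out) := by rw [hL]; exact (hx c.out).1
  have hxn : x * n⁻¹ = 1 :=
    W.eq_one_of_mem_factor (mul_mem hx (inv_mem (hle hn))) (by simp [hnx])
  rwa [mul_inv_eq_one.1 hxn]

theorem comp_list_prod_ofFn {k : ℕ} (e : W.Part ≃ Fin k) (x : ∀ j, W.factor (e.symm j))
    (i : Fin r) :
    W.comp i (List.ofFn fun j => (x j : W.K)).prod = W.comp i (x (e (Quotient.mk _ i))) := by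
  rw [map_list_prod, List.map_ofFn, List.ofFn_eq_map,
    List.prod_map_eq_pow_single (e (Quotient.mk _ i)), List.count_finRange, pow_one]
  · rfl
  · intro j hj _
    exact W.comp_eq_one_of_mem_factor (x j).2 fun h => hj (by rw [h, Equiv.apply_symm_apply])

theorem eq_of_forall_comp_out_eq {m m' : W.K} (hm : m ∈ W.M) (hm' : m' ∈ W.M)
    (h : ∀ c : W.Part, W.comp c.out m = W.comp c.out m') : m = m' := by
  refine mul_inv_eq_one.1 (W.eq_one_of_forall_comp_eq_one fun i => ?_)
  have hi : Quotient.mk _ (Quotient.mk (supportSetoid W.compM) i).out = Quotient.mk _ i :=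
    Quotient.out_eq _
  rw [W.mk_eq_mk_iff] at hi
  exact (hi _ (mul_mem hm (inv_mem hm'))).1 (by simp [h])

theorem existsUnique_eq_list_prod {k : ℕ} (e : W.Part ≃ Fin k) {m : W.K} (hm : m ∈ W.M) :
    ∃! x : ∀ j, W.factor (e.symm j), m = (List.ofFn fun j => (x j : W.K)).prod := by
  have hprod : ∀ x : ∀ j, W.factor (e.symm j), (List.ofFn fun j => (x j : W.K)).prod ∈ W.M :=
    fun x => Subgroup.list_prod_mem _ fun _ hy => by
      obtain ⟨j, rfl⟩ := List.mem_ofFn.1 hy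
      exact W.supportedIn_le_M _ (x j).2
  have hcomp : ∀ (x : ∀ j, W.factor (e.symm j)) j,
      W.comp (e.symm j).out (List.ofFn fun j => (x j : W.K)).prod =
        W.comp (e.symm j).out (x j) := by
    intro x j
    rw [W.comp_list_prod_ofFn, Quotient.out_eq, Equiv.apply_symm_apply]
  choose y hy hym using fun j => W.exists_mem_factor_comp_out_eq (e.symm j) (W.mem_M_iff.1 hm _)
  refine ⟨fun j => ⟨y j, hy j⟩, W.eq_of_forall_comp_out_eq hm (hprod _) fun c => ?_, ?_⟩
  · obtain ⟨j, rfl⟩ := e.symm.surjective c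
    rw [hcomp]
    exact (hym j).symm
  · rintro x rfl
    funext j
    refine Subtype.ext (W.eq_of_mem_factor (x j).2 (hy j) ?_)
    rw [hym, hcomp]

theorem factor_le_socle (c : W.Part) : W.factor c ≤ socle W.K :=
  le_socle inferInstance (W.factor_ne_bot c) fun _ hN hle => W.eq_bot_or_eq_factor hN hle

theorem le_M_of_minimal {N : Subgroup W.K} (hN : N.Normal) (hne : N ≠ ⊥)
    (hmin : ∀ N' : Subgroup W.K, N'.Normal → N' ≤ N → N' = ⊥ ∨ N' = N) : N ≤ W.M := by
  rcases hmin _ (Subgroup.normal_inf_normal N W.M) inf_le_left with h | h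
  · -- `N` would centralize `K ∩ L^r`, whose components exhaust `L`
    refine absurd (eq_bot_iff.2 fun n hn => Subgroup.mem_bot.2 ?_) hne
    refine W.eq_one_of_forall_comp_eq_one fun i =>
      W.eq_one_of_commute_L _ (W.comp_mem_U n i) fun l hl => ?_
    rw [← W.map_comp_M i] at hl
    obtain ⟨m, hm, rfl⟩ := hl
    have hnm := Subgroup.commute_of_normal_of_disjoint N W.M hN inferInstance (disjoint_iff.2 h)
      n m hn hm
    rw [← map_mul, hnm.eq, map_mul]
  · exact h ▸ inf_le_right

theorem M_eq_socle : W.M = socle W.K := by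
  refine le_antisymm (fun m hm => ?_) (socle_le fun N hN hne hmin => W.le_M_of_minimal hN hne hmin)
  obtain ⟨x, rfl, -⟩ := W.existsUnique_eq_list_prod (Finite.equivFin W.Part) hm
  exact Subgroup.list_prod_mem _ fun _ hy => by
    obtain ⟨j, rfl⟩ := List.mem_ofFn.1 hy
    exact W.factor_le_socle _ (x j).2

theorem mk_eq_mk_of_mk_apply_eq {g : Perm (ZMod (r * s))} (hg : g ∈ W.G) {v : Perm (Fin r)}
    {u : Fin r → Perm (ZMod s)} (hgd : MapsBlocks r s g v u) {i i' : Fin r}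
    (h : (Quotient.mk _ (v i) : W.Part) = Quotient.mk _ (v i')) :
    (Quotient.mk _ i : W.Part) = Quotient.mk _ i' := by
  rw [W.mk_eq_mk_iff] at h ⊢
  intro m hm
  have := h _ (W.conjK_mem_M hg hm)
  rwa [W.comp_conjK hg hgd, W.comp_conjK hg hgd, conj_eq_one_iff, conj_eq_one_iff] at this

theorem mk_apply_eq_mk_apply_iff {g : Perm (ZMod (r * s))} (hg : g ∈ W.G) {v : Perm (Fin r)}
    {u : Fin r → Perm (ZMod s)} (hgd : MapsBlocks r s g v u) {i i' : Fin r} :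
    (Quotient.mk _ (v i) : W.Part) = Quotient.mk _ (v i') ↔
      (Quotient.mk _ i : W.Part) = Quotient.mk _ i' :=
  ⟨W.mk_eq_mk_of_mk_apply_eq hg hgd, fun h =>
    W.mk_eq_mk_of_mk_apply_eq (W.G.inv_mem hg) hgd.inv (by simpa using h)⟩

theorem image_blocks {g : Perm (ZMod (r * s))} (hg : g ∈ W.G) {v : Perm (Fin r)}
    {u : Fin r → Perm (ZMod s)} (hgd : MapsBlocks r s g v u) (c : W.Part) :
    (W.blocks c).image v = W.blocks (Quotient.mk _ (v c.out)) := by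
  ext y
  simp only [Finset.mem_image, mem_blocks]
  constructor
  · rintro ⟨i, rfl, rfl⟩
    rw [W.mk_apply_eq_mk_apply_iff hg hgd, Quotient.out_eq]
  · intro hy
    refine ⟨v⁻¹ y, ?_, by simp⟩
    rw [← Quotient.out_eq c, ← W.mk_apply_eq_mk_apply_iff hg hgd]
    simpa using hy

theorem blockKernel_inf_diagSupport (O : Finset (Fin r)) :
    blockKernel r s W.U W.G ⊓ diagSupport r s W.L O = (W.supportedIn O).map W.K.subtype := by
  ext g
  constructor
  · rintro ⟨hK, hD⟩
    refine ⟨⟨g, hK⟩, fun i => ?_, rfl⟩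
    obtain ⟨u, hu, hu1, hgu⟩ := hD i
    rw [W.comp_eq_of_forall hgu]
    exact ⟨hu, hu1⟩
  · rintro ⟨x, hx, rfl⟩
    exact ⟨x.2, fun i => ⟨W.comp i x, (hx i).1, (hx i).2, W.comp_spec x i⟩⟩

theorem mem_inf_diagSupport_univ_iff {k : ℕ} (e : W.Part ≃ Fin k) (g : Perm (ZMod (r * s))) :
    g ∈ blockKernel r s W.U W.G ⊓ diagSupport r s W.L Finset.univ ↔
      ∃! x : ∀ j, ↥(blockKernel r s W.U W.G ⊓ diagSupport r s W.L (W.blocks (e.symm j))),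
        g = (List.ofFn fun j => (x j : Perm (ZMod (r * s)))).prod := by
  constructor
  · intro hg
    rw [W.blockKernel_inf_diagSupport] at hg
    obtain ⟨m, hm, rfl⟩ := hg
    exact (Subgroup.existsUnique_eq_list_prod_map_subtype W.K
      (fun j => W.blockKernel_inf_diagSupport _) m).2 (W.existsUnique_eq_list_prod e hm)
  · rintro ⟨x, rfl, -⟩
    exact Subgroup.list_prod_mem _ fun _ hy => by
      obtain ⟨j, rfl⟩ := List.mem_ofFn.1 hy
      exact inf_le_inf_left _ (diagSupport_mono (Finset.subset_univ _)) (x j).2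

end WreathSetting

theorem stmt_6_general (r s : ℕ) [NeZero r] [NeZero s]
    (U : Subgroup (Equiv.Perm (ZMod s))) (V : Subgroup (Equiv.Perm (Fin r)))
    (hV : ∀ x y : Fin r, ∃ v ∈ V, v x = y)
    (G : Subgroup (Equiv.Perm (ZMod (r * s))))
    (hGwr : ∀ g ∈ G, ∃ v ∈ V, ∃ u : Fin r → Equiv.Perm (ZMod s), (∀ i, u i ∈ U) ∧
      ∀ i k, g (blockEmb r s i k) = blockEmb r s (v i) (u i k))
    (hproj : ∀ v ∈ V, ∃ g ∈ G, ∃ u : Fin r → Equiv.Perm (ZMod s),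
      ∀ i k, g (blockEmb r s i k) = blockEmb r s (v i) (u i k))
    (hstab : ∀ h ∈ U, ∃ g ∈ G, ∀ k, g (blockEmb r s 0 k) = blockEmb r s 0 (h k))
    (L : Subgroup (Equiv.Perm (ZMod s))) (hLU : L ≤ U)
    (hLnormal : ∀ u ∈ U, ∀ x ∈ L, u * x * u⁻¹ ∈ L)
    (hLsimple : IsSimpleGroup ↥L)
    (hLcent : ∀ u ∈ U, (∀ x ∈ L, u * x = x * u) → u = 1)
    (hKne : blockKernel r s U G ≠ ⊥) :
    ∃ (k : ℕ) (O : Fin k → Finset (Fin r)),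
      (∀ j, (O j).Nonempty) ∧
      (∀ i : Fin r, ∃! j, i ∈ O j) ∧
      (∀ g ∈ G, ∀ (v : Equiv.Perm (Fin r)) (u : Fin r → Equiv.Perm (ZMod s)),
        (∀ i k', g (blockEmb r s i k') = blockEmb r s (v i) (u i k')) →
        ∀ j, ∃ j', (O j).image v = O j') ∧
      (∀ j, Nonempty (↥(blockKernel r s U G ⊓ diagSupport r s L (O j)) ≃* ↥L)) ∧
      (blockKernel r s U G ⊓ diagSupport r s L Finset.univ =
        (socle ↥(blockKernel r s U G)).map (blockKernel r s U G).subtype) ∧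
      (∀ g : Equiv.Perm (ZMod (r * s)),
        g ∈ blockKernel r s U G ⊓ diagSupport r s L Finset.univ ↔
        ∃! x : ∀ j : Fin k, ↥(blockKernel r s U G ⊓ diagSupport r s L (O j)),
          g = (List.ofFn fun j => ((x j : Equiv.Perm (ZMod (r * s))))).prod) := by
  let W : WreathSetting r s :=
    { U := U, G := G, L := L
      exists_mapsBlocks := fun g hg => by
        obtain ⟨v, -, u, hu, hgd⟩ := hGwr g hg
        exact ⟨v, u, hu, hgd⟩
      exists_mapsBlocks_apply_eq := fun i j => by
        obtain ⟨v, hv, rfl⟩ := hV i j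
        obtain ⟨g, hg, u, hgd⟩ := hproj v hv
        exact ⟨g, hg, v, u, hgd, rfl⟩
      exists_apply_blockEmb_zero := hstab
      L_le_U := hLU
      conj_mem_L := hLnormal
      isSimpleGroup_L := hLsimple
      eq_one_of_commute_L := hLcent
      blockKernel_ne_bot := hKne }
  let e := Finite.equivFin W.Part
  refine ⟨Nat.card W.Part, fun j => W.blocks (e.symm j),
    fun j => ⟨_, W.mem_blocks.2 (Quotient.out_eq _)⟩,
    fun i => ⟨e (Quotient.mk _ i), W.mem_blocks.2 (e.symm_apply_apply _).symm, fun j hj => ?_⟩,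
    fun g hg v u hgd j => ⟨e (Quotient.mk _ (v (e.symm j).out)), by
      simpa using W.image_blocks hg hgd _⟩,
    fun j => ⟨?_⟩, ?_, W.mem_inf_diagSupport_univ_iff e⟩
  · rw [W.mem_blocks.1 hj, Equiv.apply_symm_apply]
  · rw [W.blockKernel_inf_diagSupport]
    exact ((W.factor _).equivMapOfInjective _ W.K.subtype_injective).symm.trans (W.factorEquiv _)
  · rw [W.blockKernel_inf_diagSupport]
    exact congrArg (Subgroup.map W.K.subtype) W.M_eq_socle

/-- Let `U ≤ S_s` and `V ≤ S_r` be transitive, and let `G ≤ U ≀ V ≤ S_{rs}` project onto `V`,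
with the stabilizer of the block of the first point inducing all of `U` on that block. Assume
`U` is almost simple with nonabelian simple socle `L`, and that `K = G ∩ U^r` is nontrivial.
Then there is a partition `O_1, …, O_k` of the blocks, preserved by the blocks action of `G`,
with `K ∩ L^{O_j} ≅ L`, and `K ∩ L^r` is the internal direct product
`(K ∩ L^{O_1}) × ⋯ × (K ∩ L^{O_k})`, which is moreover the socle of `K`. -/
theorem stmt_6 (r s : ℕ) [NeZero r] [NeZero s]
    (U : Subgroup (Equiv.Perm (ZMod s))) (V : Subgroup (Equiv.Perm (Fin r)))
    (hU : ∀ x y : ZMod s, ∃ u ∈ U, u x = y)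
    (hV : ∀ x y : Fin r, ∃ v ∈ V, v x = y)
    (G : Subgroup (Equiv.Perm (ZMod (r * s))))
    (hGwr : ∀ g ∈ G, ∃ v ∈ V, ∃ u : Fin r → Equiv.Perm (ZMod s), (∀ i, u i ∈ U) ∧
      ∀ i k, g (blockEmb r s i k) = blockEmb r s (v i) (u i k))
    (hproj : ∀ v ∈ V, ∃ g ∈ G, ∃ u : Fin r → Equiv.Perm (ZMod s),
      ∀ i k, g (blockEmb r s i k) = blockEmb r s (v i) (u i k))
    (hstab : ∀ h ∈ U, ∃ g ∈ G, ∀ k, g (blockEmb r s 0 k) = blockEmb r s 0 (h k))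
    (L : Subgroup (Equiv.Perm (ZMod s))) (hLU : L ≤ U)
    (hLnormal : ∀ u ∈ U, ∀ x ∈ L, u * x * u⁻¹ ∈ L)
    (hLsimple : IsSimpleGroup ↥L)
    (hLnonab : ∃ a ∈ L, ∃ b ∈ L, a * b ≠ b * a)
    (hLcent : ∀ u ∈ U, (∀ x ∈ L, u * x = x * u) → u = 1)
    (hKne : blockKernel r s U G ≠ ⊥) :
    ∃ (k : ℕ) (O : Fin k → Finset (Fin r)),
      (∀ j, (O j).Nonempty) ∧
      (∀ i : Fin r, ∃! j, i ∈ O j) ∧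
      (∀ g ∈ G, ∀ (v : Equiv.Perm (Fin r)) (u : Fin r → Equiv.Perm (ZMod s)),
        (∀ i k', g (blockEmb r s i k') = blockEmb r s (v i) (u i k')) →
        ∀ j, ∃ j', (O j).image v = O j') ∧
      (∀ j, Nonempty (↥(blockKernel r s U G ⊓ diagSupport r s L (O j)) ≃* ↥L)) ∧
      (blockKernel r s U G ⊓ diagSupport r s L Finset.univ =
        (socle ↥(blockKernel r s U G)).map (blockKernel r s U G).subtype) ∧
      (∀ g : Equiv.Perm (ZMod (r * s)),
        g ∈ blockKernel r s U G ⊓ diagSupport r s L Finset.univ ↔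
        ∃! x : ∀ j : Fin k, ↥(blockKernel r s U G ⊓ diagSupport r s L (O j)),
          g = (List.ofFn fun j => ((x j : Equiv.Perm (ZMod (r * s))))).prod) :=
  stmt_6_general r s U V hV G hGwr hproj hstab L hLU hLnormal hLsimple hLcent hKne
end

section
/- Let r, s ≥ 1 with s even and r odd, n = rs, and consider the partition of {1,…,n} into the blocks Δ_i = {i, i+r, …, i+(s−1)r}, i = 1,…,r. Let τ = (1 2 … n) ∈ S_n, and let K ≤ S_n be a subgroup all of whose elements preserve every block Δ_i, with τ^r ∈ K. For σ ∈ K let σ_i ∈ S_s denote the permutation induced on Δ_i. Then the map ψ: K → {±1}, ψ(σ) = sgn(σ_1σ_2⋯σ_r), is a surjective group homomorphism, every σ ∈ K for which στ is an n-cycle lies in the kernel of ψ, and consequently the number of σ ∈ K such that στ is an n-cycle is at most |K|/2. -/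
/-- A permutation is a full cycle iff the cyclic group it generates acts transitively. -/
def IsFullCycle {α : Type*} (g : Equiv.Perm α) : Prop :=
  ∀ x y : α, ∃ m : ℤ, (g ^ m) x = y

lemma addRight_pow_apply {N : ℕ} (a : ZMod N) (m : ℕ) (x : ZMod N) :
    ((Equiv.addRight a) ^ m) x = x + m * a := by
  induction m with
  | zero => simp
  | succ m ih =>
    rw [pow_succ']
    simp only [Equiv.Perm.mul_apply, ih]
    show x + (m : ZMod N) * a + a = x + ((m + 1 : ℕ) : ZMod N) * a
    push_cast
    ring

lemma blockEmb_bijective (r s : ℕ) [NeZero r] [NeZero s] :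
    Function.Bijective (fun p : Fin r × ZMod s => blockEmb r s p.1 p.2) := by
  have : NeZero (r * s) := ⟨Nat.mul_ne_zero (NeZero.ne r) (NeZero.ne s)⟩
  rw [Fintype.bijective_iff_injective_and_card]
  constructor
  · rintro ⟨i, k⟩ ⟨j, l⟩ h
    simp only [blockEmb] at h
    have hik : (i : ℕ) + k.val * r < r * s := by
      calc (i : ℕ) + k.val * r < r + k.val * r := Nat.add_lt_add_right i.2 _
        _ = (k.val + 1) * r := by ring
        _ ≤ s * r := Nat.mul_le_mul_right r (ZMod.val_lt k)
        _ = r * s := Nat.mul_comm s r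
    have hjl : (j : ℕ) + l.val * r < r * s := by
      calc (j : ℕ) + l.val * r < r + l.val * r := Nat.add_lt_add_right j.2 _
        _ = (l.val + 1) * r := by ring
        _ ≤ s * r := Nat.mul_le_mul_right r (ZMod.val_lt l)
        _ = r * s := Nat.mul_comm s r
    have hnat : (i : ℕ) + k.val * r = (j : ℕ) + l.val * r := by
      have := congrArg ZMod.val h
      rwa [ZMod.val_cast_of_lt hik, ZMod.val_cast_of_lt hjl] at this
    have hr0 : 0 < r := Nat.pos_of_ne_zero (NeZero.ne r)
    have hmod : (i : ℕ) = (j : ℕ) := by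
      have := congrArg (· % r) hnat
      simpa [Nat.add_mul_mod_self_right, Nat.mod_eq_of_lt i.2, Nat.mod_eq_of_lt j.2] using this
    have hdiv : k.val = l.val := by
      have := congrArg (· / r) hnat
      simpa [Nat.add_mul_div_right _ _ hr0, Nat.div_eq_of_lt i.2, Nat.div_eq_of_lt j.2] using this
    exact Prod.ext (Fin.ext hmod) (ZMod.val_injective _ hdiv)
  · simp [ZMod.card]

/-- The identification of `Fin r × ZMod s` with `ZMod (r*s)` via `blockEmb`. -/
noncomputable def blockEquiv (r s : ℕ) [NeZero r] [NeZero s] : Fin r × ZMod s ≃ ZMod (r * s) :=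
  Equiv.ofBijective _ (blockEmb_bijective r s)

lemma blockEquiv_apply (r s : ℕ) [NeZero r] [NeZero s] (i : Fin r) (k : ZMod s) :
    blockEquiv r s (i, k) = blockEmb r s i k := rfl

/-- A permutation of a finite even-cardinality type all of whose points lie on one cycle
has sign `-1`. -/
lemma sign_of_full {N : ℕ} [NeZero N] (hN2 : 2 ≤ N) (hNeven : Even N)
    (g : Equiv.Perm (ZMod N)) (hmove : ∀ x, g x ≠ x)
    (hconn : ∀ x y : ZMod N, ∃ m : ℤ, (g ^ m) x = y) :
    Equiv.Perm.sign g = -1 := by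
  have hcyc : g.IsCycle := ⟨0, hmove 0, fun y _ => hconn 0 y⟩
  have hsupp : g.support = Finset.univ :=
    Finset.eq_univ_iff_forall.mpr fun x => Equiv.Perm.mem_support.mpr (hmove x)
  rw [hcyc.sign, hsupp]
  rw [Finset.card_univ, ZMod.card, hNeven.neg_one_pow]

/-- Let `n = rs` with `s` even and `r` odd, let `τ = (1 2 … n)` (i.e. `x ↦ x + 1`), and let
`K` be a subgroup of `S_n` all of whose elements preserve every block `Δ_i`, with `τ^r ∈ K`.
Then the map `ψ(σ) = sgn(σ_1 ⋯ σ_r)` is a surjective homomorphism `K → {±1}`, every `σ ∈ K`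
with `στ` an `n`-cycle lies in its kernel, and hence at most half the elements `σ` of `K`
have `στ` an `n`-cycle. -/
theorem stmt_10 (r s : ℕ) [NeZero r] [NeZero s] (hs : Even s) (hr : Odd r)
    (K : Subgroup (Equiv.Perm (ZMod (r * s))))
    (hblocks : ∀ σ ∈ K, ∀ i : Fin r, ∃ u : Equiv.Perm (ZMod s),
      ∀ k, σ (blockEmb r s i k) = blockEmb r s i (u k))
    (hτK : (Equiv.addRight (1 : ZMod (r * s)) : Equiv.Perm (ZMod (r * s))) ^ r ∈ K) :
    ∃ ψ : ↥K →* ℤˣ,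
      (∀ (σ : ↥K) (u : Fin r → Equiv.Perm (ZMod s)),
        (∀ i k, (σ : Equiv.Perm (ZMod (r * s))) (blockEmb r s i k) = blockEmb r s i (u i k)) →
        ψ σ = ∏ i, Equiv.Perm.sign (u i)) ∧
      Function.Surjective ψ ∧
      (∀ σ : ↥K,
        IsFullCycle ((σ : Equiv.Perm (ZMod (r * s))).trans (Equiv.addRight (1 : ZMod (r * s)))) →
        ψ σ = 1) ∧
      2 * Set.ncard {σ : Equiv.Perm (ZMod (r * s)) | σ ∈ K ∧
            IsFullCycle (σ.trans (Equiv.addRight (1 : ZMod (r * s))))}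
        ≤ Nat.card ↥K := by
  haveI hn : NeZero (r * s) := ⟨Nat.mul_ne_zero (NeZero.ne r) (NeZero.ne s)⟩
  have hrs2 : 2 ≤ r * s := by
    rcases hs with ⟨t, rfl⟩
    have ht : 1 ≤ t := Nat.one_le_iff_ne_zero.mpr (by rintro rfl; exact absurd rfl (NeZero.ne 0))
    have hr1 : 1 ≤ r := Nat.one_le_iff_ne_zero.mpr (NeZero.ne r)
    calc 2 = 1 * (1 + 1) := by ring
      _ ≤ r * (t + t) := Nat.mul_le_mul hr1 (Nat.add_le_add ht ht)
  haveI : Fact (1 < r * s) := ⟨hrs2⟩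
  have hneven : Even (r * s) := hs.mul_left r
  set τ : Equiv.Perm (ZMod (r * s)) := Equiv.addRight (1 : ZMod (r * s)) with hτdef
  have hone : (1 : ZMod (r * s)) ≠ 0 := one_ne_zero
  -- τ moves every point
  have hτfix : ∀ x : ZMod (r * s), τ x ≠ x := by
    intro x h
    have h' : x + 1 = x + 0 := by rw [add_zero]; exact h
    exact hone (add_left_cancel h')
  have hsignτ : Equiv.Perm.sign τ = -1 := by
    refine sign_of_full hrs2 hneven τ hτfix ?_
    intro x y
    refine ⟨((y - x).val : ℤ), ?_⟩
    rw [zpow_natCast, addRight_pow_apply]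
    rw [mul_one, ZMod.natCast_val, ZMod.cast_id]
    ring
  -- the homomorphism
  refine ⟨(Equiv.Perm.sign).comp K.subtype, ?_, ?_, ?_, ?_⟩
  · -- formula: ψ σ = ∏ sign (u i)
    intro σ u hu
    have hσ : (σ : Equiv.Perm (ZMod (r * s)))
        = (blockEquiv r s).permCongr (Equiv.prodCongrRight u) := by
      apply Equiv.ext
      intro x
      obtain ⟨⟨i, k⟩, rfl⟩ := (blockEquiv r s).surjective x
      rw [Equiv.permCongr_apply, Equiv.symm_apply_apply]
      rw [blockEquiv_apply, hu i k]
      rfl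
    simp only [MonoidHom.comp_apply, Subgroup.coe_subtype, hσ,
      Equiv.Perm.sign_permCongr, Equiv.Perm.sign_prodCongrRight]
  · -- surjectivity
    intro x
    rcases Int.units_eq_one_or x with rfl | rfl
    · exact ⟨1, map_one _⟩
    · refine ⟨⟨τ ^ r, hτK⟩, ?_⟩
      simp only [MonoidHom.comp_apply, Subgroup.coe_subtype, map_pow, hsignτ]
      exact hr.neg_one_pow
  · -- kernel
    intro σ hfc
    set g : Equiv.Perm (ZMod (r * s)) :=
      (σ : Equiv.Perm (ZMod (r * s))).trans τ with hgdef
    have hmove : ∀ y, g y ≠ y := by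
      intro y h
      obtain ⟨z, hz⟩ := exists_ne y
      obtain ⟨m, hm⟩ := hfc y z
      rw [Equiv.Perm.zpow_apply_eq_self_of_apply_eq_self h] at hm
      exact hz hm.symm
    have hsg : Equiv.Perm.sign g = -1 := sign_of_full hrs2 hneven g hmove hfc
    have hgmul : g = τ * (σ : Equiv.Perm (ZMod (r * s))) := rfl
    rw [hgmul, map_mul, hsignτ, neg_mul, one_mul, neg_eq_iff_eq_neg, neg_neg] at hsg
    simpa only [MonoidHom.comp_apply, Subgroup.coe_subtype] using hsg
  · -- counting
    set ψ : ↥K →* ℤˣ := (Equiv.Perm.sign).comp K.subtype with hψdef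
    set S : Set (Equiv.Perm (ZMod (r * s))) :=
      {σ | σ ∈ K ∧ IsFullCycle (σ.trans τ)} with hSdef
    have hker : ∀ x : S, (⟨x.1, x.2.1⟩ : ↥K) ∈ ψ.ker := by
      rintro ⟨x, hxK, hxfc⟩
      rw [MonoidHom.mem_ker]
      -- sign computation as above
      set g : Equiv.Perm (ZMod (r * s)) := x.trans τ with hgdef
      have hmove : ∀ y, g y ≠ y := by
        intro y h
        obtain ⟨z, hz⟩ := exists_ne y
        obtain ⟨m, hm⟩ := hxfc y z
        rw [Equiv.Perm.zpow_apply_eq_self_of_apply_eq_self h] at hm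
        exact hz hm.symm
      have hsg : Equiv.Perm.sign g = -1 := sign_of_full hrs2 hneven g hmove hxfc
      have hgmul : g = τ * x := rfl
      rw [hgmul, map_mul, hsignτ, neg_mul, one_mul, neg_eq_iff_eq_neg, neg_neg] at hsg
      simpa only [hψdef, MonoidHom.comp_apply, Subgroup.coe_subtype] using hsg
    -- injection of S into the kernel
    have hinj : Function.Injective (fun x : S => (⟨⟨x.1, x.2.1⟩, hker x⟩ : ψ.ker)) := by
      rintro ⟨a, ha⟩ ⟨b, hb⟩ h
      exact Subtype.ext
        (congrArg (fun z : ψ.ker => ((z : ↥K) : Equiv.Perm (ZMod (r * s)))) h)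
    have hcard_le : S.ncard ≤ Nat.card ψ.ker := by
      rw [← Nat.card_coe_set_eq]
      exact Nat.card_le_card_of_injective _ hinj
    have hindex : (ψ.ker).index = 2 := by
      rw [Subgroup.index_ker ψ]
      have hrange : ψ.range = ⊤ := by
        rw [MonoidHom.range_eq_top]
        intro x
        rcases Int.units_eq_one_or x with rfl | rfl
        · exact ⟨1, map_one _⟩
        · refine ⟨⟨τ ^ r, hτK⟩, ?_⟩
          simp only [hψdef, MonoidHom.comp_apply, Subgroup.coe_subtype, map_pow, hsignτ]
          exact hr.neg_one_pow
      rw [hrange]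
      rw [Nat.card_congr Subgroup.topEquiv.toEquiv, Nat.card_eq_fintype_card,
        Fintype.card_units_int]
    calc 2 * S.ncard = S.ncard * 2 := Nat.mul_comm _ _
      _ ≤ Nat.card ψ.ker * 2 := Nat.mul_le_mul_right 2 hcard_le
      _ = Nat.card ψ.ker * (ψ.ker).index := by rw [hindex]
      _ = Nat.card ↥K := Subgroup.card_mul_index _
end

section
/- Let q be a prime power and d ≥ 2, and set s = (q^d − 1)/(q − 1). If x ∈ PGL_d(q) is an element such that the cyclic subgroup ⟨x⟩ acts transitively on the s points of ℙ^{d−1}(𝔽_q) (i.e., x is a Singer cycle, of order s), then the image of x in the quotient PGL_d(q)/PSL_d(q) generates this quotient, which is cyclic of order gcd(d, q−1). -/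
/-- The general linear group `GL_d(F)`, realized as the group of units of the endomorphism
ring of `F^d`. -/
abbrev GLV (F : Type*) [Field F] (d : ℕ) : Type _ := (Module.End F (Fin d → F))ˣ

lemma glInj {F : Type*} [Field F] {d : ℕ} (g : GLV F d) :
    Function.Injective (g : Module.End F (Fin d → F)) :=
  ((Module.End.isUnit_iff (g : Module.End F (Fin d → F))).mp g.isUnit).injective

/-- The map induced on the projective space `ℙ^{d-1}(F)` by an element of `GL_d(F)`. -/
noncomputable def projMap {F : Type*} [Field F] {d : ℕ} (g : GLV F d) :
    Projectivization F (Fin d → F) → Projectivization F (Fin d → F) :=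
  Projectivization.map (↑g : Module.End F (Fin d → F)) (glInj g)

/-- The subgroup of scalars in `GL_d(F)`. -/
def scalarUnits (F : Type*) [Field F] (d : ℕ) : Subgroup (GLV F d) :=
  (Units.map (algebraMap F (Module.End F (Fin d → F))).toMonoidHom).range

instance scalarUnits_normal (F : Type*) [Field F] (d : ℕ) : (scalarUnits F d).Normal := by
  constructor
  rintro x ⟨a, rfl⟩ g
  refine ⟨a, Units.ext ?_⟩
  have : ((Units.map (algebraMap F (Module.End F (Fin d → F))).toMonoidHom) a :
      Module.End F (Fin d → F)) = algebraMap F (Module.End F (Fin d → F)) (a : F) := rfl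
  simp only [Units.val_mul, this]
  rw [mul_assoc, Algebra.commutes (a : F), ← mul_assoc, ← Units.val_mul, mul_inv_cancel,
    Units.val_one, one_mul]

/-- `PSL_d(F)` viewed inside `PGL_d(F) = GL_d(F)/(scalars)`: the image of the kernel of the
determinant. -/
noncomputable def PSLsub (F : Type*) [Field F] (d : ℕ) :
    Subgroup (GLV F d ⧸ scalarUnits F d) :=
  ((Units.map (LinearMap.det : Module.End F (Fin d → F) →* F)).ker).map
    (QuotientGroup.mk' (scalarUnits F d))

/-
Transitivity of `⟨g⟩` on the points of `ℙ(F^d)` says that every nonzero vector is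
`a • g^k v₀`. Hence a polynomial in `g` killing one nonzero vector kills everything, so the
minimal polynomial `p` of `g` is irreducible, and `u ↦ u(g) v₀` identifies the field
`K = F[X]/(p)` with `F^d`, `g` becoming multiplication by the root. So `det g = N_{K/F}(root)`
and every element of `K` is `a • root^k`; as the norm of an extension of finite fields is
surjective, every `b ∈ Fˣ` is `a^d * (det g)^k`. Since `det` identifies `PGL_d/PSL_d` with
`Fˣ/(Fˣ)^d`, the image of `g` generates it, and its order is the index of the `d`-th powers in
the cyclic group `Fˣ`, i.e. `gcd(d, q - 1)`.
-/

open Polynomial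

section SingerCycle

variable {F V : Type*} [Field F] [AddCommGroup V] [Module F V]

/-- `⟨T⟩` acts transitively on the points of `ℙ(V)`. -/
def IsSingerCycle (T : Module.End F V) : Prop :=
  ∀ v w : V, v ≠ 0 → w ≠ 0 → ∃ (k : ℕ) (a : F), a • (T ^ k) v = w

namespace IsSingerCycle

variable {T : Module.End F V} (hT : IsSingerCycle T)
include hT

theorem exists_smul_pow_apply_eq {v₀ : V} (hv₀ : v₀ ≠ 0) (w : V) :
    ∃ (k : ℕ) (a : F), a • (T ^ k) v₀ = w := by
  obtain rfl | hw := eq_or_ne w 0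
  · exact ⟨0, 0, zero_smul F _⟩
  · exact hT v₀ w hv₀ hw

theorem aeval_eq_zero_or_injective (r : F[X]) :
    aeval T r = 0 ∨ Function.Injective (aeval T r) := by
  by_cases h : ∃ w ≠ 0, aeval T r w = 0
  · obtain ⟨w, hw, hrw⟩ := h
    left
    ext v
    obtain ⟨k, a, rfl⟩ := hT.exists_smul_pow_apply_eq hw v
    have hcomm : Commute (aeval T r) (T ^ k) := by
      simpa using (Commute.all r (X ^ k)).map (aeval T)
    rw [map_smul, ← Module.End.mul_apply, hcomm.eq, Module.End.mul_apply, hrw, map_zero,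
      smul_zero, LinearMap.zero_apply]
  · push Not at h
    exact .inr ((injective_iff_map_eq_zero _).mpr fun w hrw => by_contra fun hw => h w hw hrw)

theorem irreducible_minpoly [FiniteDimensional F V] [Nontrivial V] :
    Irreducible (minpoly F T) := by
  have hp0 : minpoly F T ≠ 0 := minpoly.ne_zero (Algebra.IsIntegral.isIntegral T)
  refine ⟨minpoly.not_isUnit F T, fun a b hab => ?_⟩
  have unit_of_vanishes : ∀ c e : F[X], minpoly F T = c * e → aeval T c = 0 → IsUnit e := by
    intro c e hce hc
    obtain ⟨f, rfl⟩ := minpoly.dvd F T hc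
    refine IsUnit.of_mul_eq_one f (mul_left_cancel₀ hp0 ?_)
    rw [mul_one, mul_comm e f, ← mul_assoc, ← hce]
  rcases hT.aeval_eq_zero_or_injective a with ha | ha
  · exact .inr (unit_of_vanishes a b hab ha)
  rcases hT.aeval_eq_zero_or_injective b with hb | hb
  · exact .inl (unit_of_vanishes b a (hab.trans (mul_comm a b)) hb)
  obtain ⟨v, hv⟩ := exists_ne (0 : V)
  have hinj : Function.Injective (aeval T (minpoly F T)) := by
    rw [hab, map_mul, Module.End.coe_mul]
    exact ha.comp hb
  exact absurd (hinj (by rw [minpoly.aeval, map_zero, LinearMap.zero_apply])) hv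

end IsSingerCycle

section AdjoinRootMinpoly

variable (T : Module.End F V)

noncomputable def adjoinRootEval : AdjoinRoot (minpoly F T) →ₐ[F] Module.End F V :=
  Ideal.Quotient.liftₐ _ (aeval T) fun r hr => by
    obtain ⟨c, rfl⟩ := Ideal.mem_span_singleton.mp hr
    rw [map_mul, minpoly.aeval, zero_mul]

theorem adjoinRootEval_root : adjoinRootEval T (AdjoinRoot.root (minpoly F T)) = T := by
  rw [← AdjoinRoot.mk_X]
  exact aeval_X T

noncomputable def adjoinRootOrbit (v₀ : V) : AdjoinRoot (minpoly F T) →ₗ[F] V :=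
  LinearMap.applyₗ v₀ ∘ₗ (adjoinRootEval T).toLinearMap

variable {T}

theorem adjoinRootOrbit_apply (v₀ : V) (y : AdjoinRoot (minpoly F T)) :
    adjoinRootOrbit T v₀ y = adjoinRootEval T y v₀ := rfl

theorem adjoinRootOrbit_root_mul (v₀ : V) (y : AdjoinRoot (minpoly F T)) :
    adjoinRootOrbit T v₀ (AdjoinRoot.root _ * y) = T (adjoinRootOrbit T v₀ y) := by
  rw [adjoinRootOrbit_apply, map_mul, adjoinRootEval_root, Module.End.mul_apply,
    adjoinRootOrbit_apply]

theorem adjoinRootOrbit_smul_root_pow (v₀ : V) (a : F) (k : ℕ) :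
    adjoinRootOrbit T v₀ (a • AdjoinRoot.root _ ^ k) = a • (T ^ k) v₀ := by
  rw [map_smul, adjoinRootOrbit_apply, map_pow, adjoinRootEval_root]

theorem adjoinRootOrbit_injective [Fact (Irreducible (minpoly F T))] {v₀ : V}
    (hv₀ : v₀ ≠ 0) : Function.Injective (adjoinRootOrbit T v₀) := by
  refine (injective_iff_map_eq_zero _).mpr fun y hy => by_contra fun hy0 => hv₀ ?_
  calc v₀ = adjoinRootEval T (y⁻¹ * y) v₀ := by rw [inv_mul_cancel₀ hy0, map_one]; rfl
    _ = adjoinRootEval T y⁻¹ (adjoinRootOrbit T v₀ y) := by rw [map_mul]; rfl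
    _ = 0 := by rw [hy, map_zero]

end AdjoinRootMinpoly

namespace IsSingerCycle

variable {T : Module.End F V} (hT : IsSingerCycle T)
include hT

theorem exists_smul_root_pow_eq [FiniteDimensional F V] [Nontrivial V]
    (u : AdjoinRoot (minpoly F T)) : ∃ (k : ℕ) (a : F), a • AdjoinRoot.root _ ^ k = u := by
  have := Fact.mk hT.irreducible_minpoly
  obtain ⟨v₀, hv₀⟩ := exists_ne (0 : V)
  obtain ⟨k, a, h⟩ := hT.exists_smul_pow_apply_eq hv₀ (adjoinRootOrbit T v₀ u)
  exact ⟨k, a, adjoinRootOrbit_injective hv₀ (by rw [adjoinRootOrbit_smul_root_pow, h])⟩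

noncomputable def adjoinRootEquiv [FiniteDimensional F V] [Nontrivial V] {v₀ : V}
    (hv₀ : v₀ ≠ 0) : AdjoinRoot (minpoly F T) ≃ₗ[F] V :=
  have := Fact.mk hT.irreducible_minpoly
  .ofBijective (adjoinRootOrbit T v₀) ⟨adjoinRootOrbit_injective hv₀, fun w => by
    obtain ⟨k, a, rfl⟩ := hT.exists_smul_pow_apply_eq hv₀ w
    exact ⟨_, adjoinRootOrbit_smul_root_pow v₀ a k⟩⟩

theorem det_eq_norm_root [FiniteDimensional F V] [Nontrivial V] {v₀ : V} (hv₀ : v₀ ≠ 0) :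
    LinearMap.det T = Algebra.norm F (AdjoinRoot.root (minpoly F T)) := by
  set e := hT.adjoinRootEquiv hv₀
  have hconj : T = e.toLinearMap ∘ₗ Algebra.lmul F _ (AdjoinRoot.root (minpoly F T)) ∘ₗ
      e.symm.toLinearMap := by
    ext w
    obtain ⟨y, rfl⟩ := e.surjective w
    simp only [LinearMap.comp_apply, LinearEquiv.coe_coe, e.symm_apply_apply,
      Algebra.coe_lmul_eq_mul]
    exact (adjoinRootOrbit_root_mul v₀ y).symm
  rw [Algebra.norm_apply, ← LinearMap.det_conj _ e, ← hconj]

theorem exists_pow_finrank_mul_det_pow_eq [Finite F] [FiniteDimensional F V] [Nontrivial V]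
    (b : F) : ∃ (a : F) (k : ℕ), a ^ Module.finrank F V * LinearMap.det T ^ k = b := by
  have := Fact.mk hT.irreducible_minpoly
  obtain ⟨v₀, hv₀⟩ := exists_ne (0 : V)
  set e := hT.adjoinRootEquiv hv₀
  have : Module.Finite F (AdjoinRoot (minpoly F T)) := .equiv e.symm
  have := Module.finite_of_finite F (M := AdjoinRoot (minpoly F T))
  obtain ⟨u, rfl⟩ := FiniteField.norm_surjective F (AdjoinRoot (minpoly F T)) b
  obtain ⟨k, a, rfl⟩ := hT.exists_smul_root_pow_eq u
  refine ⟨a, k, ?_⟩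
  rw [Algebra.smul_def, map_mul, map_pow, Algebra.norm_algebraMap, e.finrank_eq,
    hT.det_eq_norm_root hv₀]

end IsSingerCycle

end SingerCycle

section ProjectiveGeneralLinear

variable {F : Type*} [Field F] {d : ℕ}

theorem projMap_iterate (g : GLV F d) (k : ℕ) :
    (projMap g)^[k] = projMap (g ^ k) := by
  induction k with
  | zero => ext ⟨v⟩; rfl
  | succ k ih =>
    rw [Function.iterate_succ', ih, pow_succ']
    simp only [projMap, Units.val_mul, Module.End.mul_eq_comp]
    rw [Projectivization.map_comp]

theorem isSingerCycle_of_projMap {g : GLV F d}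
    (hg : ∀ P Q : Projectivization F (Fin d → F), ∃ k : ℕ, (projMap g)^[k] P = Q) :
    IsSingerCycle (g : Module.End F (Fin d → F)) := by
  intro v w hv hw
  obtain ⟨k, hk⟩ := hg (.mk F v hv) (.mk F w hw)
  rw [projMap_iterate, projMap, Projectivization.map_mk, eq_comm,
    Projectivization.mk_eq_mk_iff'] at hk
  obtain ⟨a, ha⟩ := hk
  exact ⟨k, a, by rw [← ha, Units.val_pow_eq_pow_val]⟩

variable (F d) in
noncomputable abbrev detGL : GLV F d →* Fˣ := Units.map LinearMap.det

theorem detGL_scalar (a : Fˣ) :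
    detGL F d (Units.map (algebraMap F (Module.End F (Fin d → F))).toMonoidHom a) = a ^ d := by
  ext
  simp [Module.algebraMap_end_eq_smul_id, LinearMap.det_smul]

theorem map_detGL_scalarUnits :
    (scalarUnits F d).map (detGL F d) = (powMonoidHom d : Fˣ →* Fˣ).range := by
  rw [scalarUnits, MonoidHom.map_range]
  congr 1
  ext1 a
  exact detGL_scalar a

theorem comap_mk_PSLsub :
    (PSLsub F d).comap (QuotientGroup.mk' _) =
      (powMonoidHom d : Fˣ →* Fˣ).range.comap (detGL F d) := by
  rw [PSLsub, Subgroup.comap_map_eq, QuotientGroup.ker_mk', ← map_detGL_scalarUnits,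
    Subgroup.comap_map_eq, sup_comm]

theorem mk_mem_PSLsub_iff (w : GLV F d) :
    QuotientGroup.mk' _ w ∈ PSLsub F d ↔
      detGL F d w ∈ (powMonoidHom d : Fˣ →* Fˣ).range := by
  rw [← Subgroup.mem_comap, comap_mk_PSLsub, Subgroup.mem_comap]

theorem card_quotient_PSLsub [Finite F] (hdet : Function.Surjective (detGL F d)) :
    Nat.card ((GLV F d ⧸ scalarUnits F d) ⧸ PSLsub F d) = Nat.gcd d (Nat.card F - 1) := by
  rw [← Subgroup.index,
    ← Subgroup.index_comap_of_surjective _ (QuotientGroup.mk'_surjective _), comap_mk_PSLsub,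
    Subgroup.index_comap_of_surjective _ hdet, IsCyclic.index_powMonoidHom_range,
    Nat.card_units, Nat.gcd_comm]

theorem IsSingerCycle.exists_pow_mul_detGL_pow_eq [Finite F] [NeZero d] {g : GLV F d}
    (hg : IsSingerCycle (g : Module.End F (Fin d → F))) (b : Fˣ) :
    ∃ (a : Fˣ) (k : ℕ), a ^ d * detGL F d g ^ k = b := by
  obtain ⟨a, k, h⟩ := hg.exists_pow_finrank_mul_det_pow_eq (b : F)
  rw [Module.finrank_fin_fun] at h
  have ha : a ≠ 0 := by
    rintro rfl
    exact b.ne_zero (by rw [← h, zero_pow (NeZero.ne d), zero_mul])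
  exact ⟨.mk0 a ha, k, Units.ext (by simpa using h)⟩

end ProjectiveGeneralLinear

/-- If `x ∈ PGL_d(q)` is such that the cyclic group `⟨x⟩` acts transitively on the points
of `ℙ^{d-1}(F_q)` (i.e. `x` is a Singer cycle, of order `s = (q^d-1)/(q-1)`), then the image
of `x` generates the quotient `PGL_d(q)/PSL_d(q)`, which is cyclic of order `gcd(d, q-1)`. -/
theorem stmt_12 (F : Type*) [Field F] [Fintype F] (d : ℕ) (hd : 2 ≤ d)
    (x : GLV F d ⧸ scalarUnits F d)
    (hx : ∃ g : GLV F d, QuotientGroup.mk' (scalarUnits F d) g = x ∧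
      ∀ P Q : Projectivization F (Fin d → F), ∃ k : ℕ, (projMap g)^[k] P = Q) :
    (∀ y : GLV F d ⧸ scalarUnits F d, ∃ k : ℤ, (x ^ k)⁻¹ * y ∈ PSLsub F d) ∧
    Nat.card ((GLV F d ⧸ scalarUnits F d) ⧸ PSLsub F d) = Nat.gcd d (Fintype.card F - 1) := by
  obtain ⟨g, rfl, hg⟩ := hx
  have : NeZero d := ⟨by omega⟩
  have hdecomp := (isSingerCycle_of_projMap hg).exists_pow_mul_detGL_pow_eq
  constructor
  · intro y
    obtain ⟨h, rfl⟩ := QuotientGroup.mk'_surjective _ y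
    obtain ⟨a, k, hak⟩ := hdecomp (detGL F d h)
    refine ⟨k, ?_⟩
    rw [← map_zpow, ← map_inv, ← map_mul, mk_mem_PSLsub_iff]
    refine ⟨a, ?_⟩
    rw [map_mul, map_inv, map_zpow, ← hak, zpow_natCast, powMonoidHom_apply, mul_comm (a ^ d),
      inv_mul_cancel_left]
  · rw [← Nat.card_eq_fintype_card]
    refine card_quotient_PSLsub fun b => ?_
    obtain ⟨a, k, hak⟩ := hdecomp b
    exact ⟨Units.map (algebraMap F _).toMonoidHom a * g ^ k,
      by rw [map_mul, map_pow, detGL_scalar, hak]⟩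
end

section
/- Let r ≥ 1 and let K ≤ (A_4)^r be a subgroup of the r-fold direct power of the alternating group A_4 whose projection to each of the r coordinates is surjective onto A_4. Then K has trivial center and K has no normal subgroup of index 2 (i.e., K is 2-perfect). -/
set_option maxRecDepth 10000

private def c0 : Equiv.Perm (Fin 4) := Equiv.swap 0 1 * Equiv.swap 1 2

private lemma c0_mem : c0 ∈ alternatingGroup (Fin 4) := by
  rw [Equiv.Perm.mem_alternatingGroup]; decide

private lemma key1 : ∀ v : Equiv.Perm (Fin 4), v * v = 1 → Equiv.Perm.sign v = 1 →
    v * (c0 * v * c0⁻¹) * (c0 * c0 * v * c0⁻¹ * c0⁻¹) = 1 := by decide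

private lemma key3 : ∀ x : Equiv.Perm (Fin 4), Equiv.Perm.sign x = 1 →
    (x ^ 3) * (x ^ 3) = 1 := by decide

private lemma key4 : ∀ a : Equiv.Perm (Fin 4), Equiv.Perm.sign a = 1 →
    (∀ b : Equiv.Perm (Fin 4), Equiv.Perm.sign b = 1 → a * b = b * a) → a = 1 := by decide

private lemma key2 : ∀ v c : Equiv.Perm (Fin 4), v * v = 1 → Equiv.Perm.sign v = 1 →
    (v * (c * v * c⁻¹) * (c * c * v * c⁻¹ * c⁻¹)) *
      (v * (c * v * c⁻¹) * (c * c * v * c⁻¹ * c⁻¹)) = 1 := by decide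

/-- If `K ≤ (A₄)^r` projects onto `A₄` in every coordinate, then `K` has trivial center
and no normal subgroup of index 2 (i.e. `K` is 2-perfect). -/
theorem stmt_13 (r : ℕ) (hr : 1 ≤ r)
    (K : Subgroup (∀ _ : Fin r, Equiv.Perm (Fin 4)))
    (hKle : ∀ g ∈ K, ∀ i : Fin r, g i ∈ alternatingGroup (Fin 4))
    (hsurj : ∀ (i : Fin r), ∀ h ∈ alternatingGroup (Fin 4), ∃ g ∈ K, g i = h) :
    (∀ z : ↥K, (∀ g : ↥K, z * g = g * z) → z = 1) ∧
    (∀ N : Subgroup ↥K, N.Normal → N.index ≠ 2) := by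
  have hsign : ∀ g ∈ K, ∀ i : Fin r, Equiv.Perm.sign (g i) = 1 := by
    intro g hg i
    exact Equiv.Perm.mem_alternatingGroup.mp (hKle g hg i)
  constructor
  · -- trivial center
    intro z hz
    have hcoord : ∀ i : Fin r, (z : ∀ _ : Fin r, Equiv.Perm (Fin 4)) i = 1 := by
      intro i
      apply key4 _ (hsign z z.2 i)
      intro b hb
      obtain ⟨g, hgK, hgi⟩ := hsurj i b (Equiv.Perm.mem_alternatingGroup.mpr hb)
      have h := hz ⟨g, hgK⟩
      have h' := congrFun (congrArg Subtype.val h) i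
      simpa [hgi] using h'
    exact Subtype.ext (funext hcoord)
  · -- no index-2 normal subgroup
    intro N hN hidx
    haveI := hN
    set Q := (↥K) ⧸ N with hQ
    have hcardQ : Nat.card Q = 2 := hidx
    haveI : Finite Q := (Nat.card_pos_iff.mp (by omega)).2
    have hsq : ∀ x : Q, x * x = 1 := by
      intro x
      have := pow_card_eq_one' (x := x)
      rwa [hcardQ, pow_two] at this
    have hinv : ∀ x : Q, x⁻¹ = x := fun x =>
      inv_eq_of_mul_eq_one_right (hsq x)
    have hcomm : ∀ x y : Q, x * y = y * x := by
      intro x y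
      calc x * y = (x * y)⁻¹ := (hinv _).symm
        _ = y⁻¹ * x⁻¹ := mul_inv_rev _ _
        _ = y * x := by rw [hinv, hinv]
    have hconj : ∀ x y : Q, x * y * x⁻¹ = y := by
      intro x y
      rw [hcomm x y, mul_assoc, mul_inv_cancel, mul_one]
    -- main induction: elements of K with all coordinates of order dividing 2 are in N
    have main : ∀ n : ℕ, ∀ v : ↥K,
        (∀ j : Fin r, (v : ∀ _ : Fin r, Equiv.Perm (Fin 4)) j *
          (v : ∀ _ : Fin r, Equiv.Perm (Fin 4)) j = 1) →
        (Finset.univ.filter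
          (fun j => (v : ∀ _ : Fin r, Equiv.Perm (Fin 4)) j ≠ 1)).card ≤ n →
        (QuotientGroup.mk v : Q) = 1 := by
      intro n
      induction n with
      | zero =>
        intro v hv hcard
        have hall : ∀ j, (v : ∀ _ : Fin r, Equiv.Perm (Fin 4)) j = 1 := by
          intro j
          by_contra h
          have hj : j ∈ Finset.univ.filter
              (fun j => (v : ∀ _ : Fin r, Equiv.Perm (Fin 4)) j ≠ 1) := by
            simp [h]
          have := Finset.card_pos.mpr ⟨j, hj⟩
          omega
        have : v = 1 := Subtype.ext (funext hall)
        rw [this, QuotientGroup.mk_one]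
      | succ n ih =>
        intro v hv hcard
        by_cases hall : ∀ j, (v : ∀ _ : Fin r, Equiv.Perm (Fin 4)) j = 1
        · have : v = 1 := Subtype.ext (funext hall)
          rw [this, QuotientGroup.mk_one]
        · push_neg at hall
          obtain ⟨i, hi⟩ := hall
          obtain ⟨c, hcK, hci⟩ := hsurj i c0 c0_mem
          set C : ↥K := ⟨c, hcK⟩ with hC
          set w : ↥K := v * (C * v * C⁻¹) * (C * C * v * C⁻¹ * C⁻¹) with hw
          have hwcoord : ∀ j, (w : ∀ _ : Fin r, Equiv.Perm (Fin 4)) j =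
              (v : ∀ _ : Fin r, Equiv.Perm (Fin 4)) j *
                (c j * (v : ∀ _ : Fin r, Equiv.Perm (Fin 4)) j * (c j)⁻¹) *
                (c j * c j * (v : ∀ _ : Fin r, Equiv.Perm (Fin 4)) j *
                  (c j)⁻¹ * (c j)⁻¹) := by
            intro j; rfl
          have hw2 : ∀ j, (w : ∀ _ : Fin r, Equiv.Perm (Fin 4)) j *
              (w : ∀ _ : Fin r, Equiv.Perm (Fin 4)) j = 1 := by
            intro j
            rw [hwcoord]
            exact key2 _ _ (hv j) (hsign v v.2 j)
          have hwi : (w : ∀ _ : Fin r, Equiv.Perm (Fin 4)) i = 1 := by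
            rw [hwcoord, hci]
            exact key1 _ (hv i) (hsign v v.2 i)
          have hwj : ∀ j, (v : ∀ _ : Fin r, Equiv.Perm (Fin 4)) j = 1 →
              (w : ∀ _ : Fin r, Equiv.Perm (Fin 4)) j = 1 := by
            intro j h
            rw [hwcoord, h]
            group
          have hsub : Finset.univ.filter
              (fun j => (w : ∀ _ : Fin r, Equiv.Perm (Fin 4)) j ≠ 1) ⊆
              (Finset.univ.filter
                (fun j => (v : ∀ _ : Fin r, Equiv.Perm (Fin 4)) j ≠ 1)).erase i := by
            intro j hj
            simp only [Finset.mem_filter, Finset.mem_erase, Finset.mem_univ,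
              true_and] at hj ⊢
            refine ⟨?_, fun h => hj (hwj j h)⟩
            rintro rfl
            exact hj hwi
          have hmem : i ∈ Finset.univ.filter
              (fun j => (v : ∀ _ : Fin r, Equiv.Perm (Fin 4)) j ≠ 1) := by simp [hi]
          have hcard' : (Finset.univ.filter
              (fun j => (w : ∀ _ : Fin r, Equiv.Perm (Fin 4)) j ≠ 1)).card ≤ n := by
            have h1 := Finset.card_le_card hsub
            have h2 := Finset.card_erase_of_mem hmem
            have h3 := Finset.card_pos.mpr ⟨i, hmem⟩
            omega
          have hmkw := ih w hw2 hcard'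
          -- mk v = mk w
          have hmkeq : (QuotientGroup.mk v : Q) = QuotientGroup.mk w := by
            have : (QuotientGroup.mk w : Q) =
                QuotientGroup.mk v *
                  (QuotientGroup.mk C * QuotientGroup.mk v * (QuotientGroup.mk C)⁻¹) *
                  (QuotientGroup.mk C * QuotientGroup.mk C * QuotientGroup.mk v *
                    (QuotientGroup.mk C)⁻¹ * (QuotientGroup.mk C)⁻¹) := by
              rw [hw]
              simp [QuotientGroup.mk_mul, QuotientGroup.mk_inv, mul_assoc]
            rw [this, hconj]
            have e : QuotientGroup.mk C * QuotientGroup.mk C * (QuotientGroup.mk v : Q) *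
                (QuotientGroup.mk C)⁻¹ * (QuotientGroup.mk C)⁻¹ =
                QuotientGroup.mk C * (QuotientGroup.mk C * QuotientGroup.mk v *
                  (QuotientGroup.mk C)⁻¹) * (QuotientGroup.mk C)⁻¹ := by
              group
            rw [e, hconj, hconj, hsq, one_mul]
          rw [hmkeq, hmkw]
    -- every element of K is in N
    have hNall : ∀ g : ↥K, g ∈ N := by
      intro g
      have h3 : ∀ j : Fin r, ((g ^ 3 : ↥K) : ∀ _ : Fin r, Equiv.Perm (Fin 4)) j *
          ((g ^ 3 : ↥K) : ∀ _ : Fin r, Equiv.Perm (Fin 4)) j = 1 := by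
        intro j
        have hc : ((g ^ 3 : ↥K) : ∀ _ : Fin r, Equiv.Perm (Fin 4)) j =
            ((g : ∀ _ : Fin r, Equiv.Perm (Fin 4)) j) ^ 3 := rfl
        rw [hc]
        exact key3 _ (hsign g g.2 j)
      have hg3 : (QuotientGroup.mk (g ^ 3) : Q) = 1 := main _ (g ^ 3) h3 le_rfl
      have : (QuotientGroup.mk (g ^ 3) : Q) = QuotientGroup.mk g := by
        rw [show (g : ↥K) ^ 3 = g * g * g by rw [pow_succ, pow_two]]
        rw [QuotientGroup.mk_mul, QuotientGroup.mk_mul, hsq, one_mul]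
      rw [this] at hg3
      exact (QuotientGroup.eq_one_iff g).mp hg3
    have : N = ⊤ := by
      rw [Subgroup.eq_top_iff']
      exact hNall
    rw [this, Subgroup.index_top] at hidx
    omega
end
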